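/- arXiv:1407.7253 — 6 statements merged into one kernel-verified Lean document; each statement's English description precedes it below -/
import Mathlib

section
/- Let f and h be orientation-preserving piecewise linear homeomorphisms of the real line with hfh⁻¹ = f⁻¹ and f ≠ id. Then f has a fixed point and h has no fixed point. -/
/-!
Fixed points of `f` are permuted by `h`, since `f ∘ h ∘ f = h`.  If `f` had none, `f - id` would
have constant sign and `h x = f (h (f x))` would be strictly above (or below) `h x`.  At a common
fixed point `p`, both maps are linear on a right neighbourhood of `p`, with slopes `a` and `b`, and
the relation forces `a² b = b`, so `f` is the identity just right of `p`.  A continuous induction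
from `p`, in which `h` or `h⁻¹` pushes the right end of an interval of fixed points of `f`
further to the right unless that end is fixed by `h`, makes `f` the identity on `[p, ∞)`;
reflecting in `0` gives `(-∞, p]`.
-/

/-- A function `ℝ → ℝ` is piecewise linear: its set of break points is locally
finite, and off the break points the function is locally affine. -/
def IsPLFun (f : ℝ → ℝ) : Prop :=
  ∃ B : Set ℝ, (∀ r : ℝ, (B ∩ Set.Icc (-r) r).Finite) ∧
    ∀ x ∉ B, ∃ a b : ℝ, ∀ᶠ y in nhds x, f y = a * y + b

/-- An element of `PL⁺(ℝ)`: an increasing piecewise linear bijection of the line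
(such a map is automatically a homeomorphism of `ℝ`). -/
def PLplusR (f : ℝ → ℝ) : Prop :=
  Function.Bijective f ∧ StrictMono f ∧ IsPLFun f

open Set Filter Topology Function

theorem eventually_nhdsNE_notMem_of_finite_inter_Icc {B : Set ℝ}
    (hB : ∀ r : ℝ, (B ∩ Icc (-r) r).Finite) (p : ℝ) : ∀ᶠ x in 𝓝[≠] p, x ∉ B := by
  set r := |p| + 1
  have hfar : ((B ∩ Icc (-r) r) \ {p})ᶜ ∈ 𝓝 p :=
    (hB r).sdiff.isClosed.compl_mem_nhds (by simp)
  have hnear : Icc (-r) r ∈ 𝓝 p :=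
    Icc_mem_nhds (by linarith [neg_abs_le p]) (by linarith [le_abs_self p])
  filter_upwards [nhdsWithin_le_nhds hfar, nhdsWithin_le_nhds hnear, self_mem_nhdsWithin]
    with x hxfar hxnear hxp hxB
  exact hxfar ⟨⟨hxB, hxnear⟩, hxp⟩

/-- The local coefficients are recovered from `f` as `(f' x, f x - f' x * x)`, which is therefore
a locally constant function on `s`. -/
theorem IsPreconnected.exists_affine_of_locally_affine {s : Set ℝ} (hs : IsPreconnected s)
    {f : ℝ → ℝ} (hf : ∀ x ∈ s, ∃ a b : ℝ, ∀ᶠ y in 𝓝 x, f y = a * y + b) :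
    ∃ a b : ℝ, ∀ x ∈ s, f x = a * x + b := by
  set c : ℝ → ℝ × ℝ := fun x => (deriv f x, f x - deriv f x * x)
  have hc : ∀ x ∈ s, ∀ᶠ y in 𝓝 x, c y = c x := by
    intro x hx
    obtain ⟨a, b, hab⟩ := hf x hx
    have hcab : ∀ᶠ y in 𝓝 x, c y = (a, b) := hab.eventually_nhds.mono fun y hy => by
      have hderiv : deriv f y = a := by
        rw [Filter.EventuallyEq.deriv_eq hy]
        simp
      simp [c, hderiv, hy.self_of_nhds]
    rwa [hcab.self_of_nhds]
  rcases s.eq_empty_or_nonempty with rfl | ⟨x₀, hx₀⟩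
  · exact ⟨0, 0, by simp⟩
  have : PreconnectedSpace s := isPreconnected_iff_preconnectedSpace.1 hs
  have hlc : IsLocallyConstant (s.domRestrict c) := (IsLocallyConstant.iff_eventually_eq _).2
    fun x => continuous_subtype_val.continuousAt.eventually (hc x x.2)
  refine ⟨(c x₀).1, (c x₀).2, fun x hx => ?_⟩
  have hcx : c x = c x₀ := hlc.apply_eq_of_preconnectedSpace ⟨x, hx⟩ ⟨x₀, hx₀⟩
  rw [← hcx]
  ring

theorem IsPLFun.exists_eventually_eq_affine_nhdsGT {f : ℝ → ℝ} (hf : IsPLFun f) (p : ℝ) :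
    ∃ a b : ℝ, ∀ᶠ x in 𝓝[>] p, f x = a * x + b := by
  obtain ⟨B, hB, haff⟩ := hf
  have hbreak : ∀ᶠ x in 𝓝[>] p, x ∉ B :=
    nhdsWithin_mono p (fun x hx => ne_of_gt hx) (eventually_nhdsNE_notMem_of_finite_inter_Icc hB p)
  obtain ⟨q, hpq, hsub⟩ := mem_nhdsGT_iff_exists_Ioo_subset.1 hbreak
  obtain ⟨a, b, hab⟩ :=
    isPreconnected_Ioo.exists_affine_of_locally_affine fun x hx => haff x (hsub hx)
  exact ⟨a, b, mem_of_superset (Ioo_mem_nhdsGT hpq) hab⟩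

theorem PLplusR.continuous {f : ℝ → ℝ} (hf : PLplusR f) : Continuous f :=
  (hf.2.1.orderIsoOfSurjective f hf.1.2).continuous

theorem PLplusR.tendsto_nhdsGT {f : ℝ → ℝ} (hf : PLplusR f) {p : ℝ} (hp : f p = p) :
    Tendsto f (𝓝[>] p) (𝓝[>] p) := by
  have hmaps : MapsTo f (Ioi p) (Ioi p) := fun x hx => by simpa [hp] using hf.2.1 hx
  simpa [hp] using
    (hf.continuous.continuousWithinAt (s := Ioi p) (x := p)).tendsto_nhdsWithin hmaps

theorem PLplusR.exists_eventually_eq_linear_nhdsGT {f : ℝ → ℝ} (hf : PLplusR f) {p : ℝ}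
    (hp : f p = p) : ∃ a > 0, ∀ᶠ x in 𝓝[>] p, f x = p + a * (x - p) := by
  obtain ⟨a, b, hab⟩ := hf.2.2.exists_eventually_eq_affine_nhdsGT p
  have hlim : a * p + b = p := by
    have hcf : Tendsto f (𝓝[>] p) (𝓝 p) := by
      simpa [hp] using (hf.continuous.tendsto p).mono_left nhdsWithin_le_nhds
    have hcont : Tendsto (fun x => a * x + b) (𝓝[>] p) (𝓝 (a * p + b)) :=
      (Continuous.tendsto (by fun_prop) p).mono_left nhdsWithin_le_nhds
    exact tendsto_nhds_unique_of_eventuallyEq hcont hcf (hab.mono fun x hx => hx.symm)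
  have hlin : ∀ᶠ x in 𝓝[>] p, f x = p + a * (x - p) :=
    hab.mono fun x hx => by rw [hx]; linear_combination hlim
  refine ⟨a, ?_, hlin⟩
  obtain ⟨x, hx, hpx⟩ := (hlin.and self_mem_nhdsWithin).exists
  have hfpx : f p < f x := hf.2.1 hpx
  rw [hp, hx] at hfpx
  exact pos_of_mul_pos_left (by linarith) (sub_pos.2 hpx).le

theorem PLplusR.eventually_isFixedPt_nhdsGT {f h : ℝ → ℝ} (hf : PLplusR f) (hh : PLplusR h)
    (hrev : ∀ x, f (h (f x)) = h x) {p : ℝ} (hfp : f p = p) (hhp : h p = p) :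
    ∀ᶠ x in 𝓝[>] p, f x = x := by
  obtain ⟨a, ha, hfa⟩ := hf.exists_eventually_eq_linear_nhdsGT hfp
  obtain ⟨b, hb, hhb⟩ := hh.exists_eventually_eq_linear_nhdsGT hhp
  have htf := hf.tendsto_nhdsGT hfp
  have hthf := (hh.tendsto_nhdsGT hhp).comp htf
  obtain ⟨x, ⟨hfx, hhx, hhfx, hfhfx⟩, hpx⟩ :=
    ((hfa.and (hhb.and ((htf.eventually hhb).and (hthf.eventually hfa)))).and
      self_mem_nhdsWithin).exists
  have hslope : (a + 1) * (a - 1) * (b * (x - p)) = 0 := by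
    simp only [comp_apply, hrev] at hfhfx
    rw [hfhfx, hhfx, hfx] at hhx
    linear_combination hhx
  have ha1 : a = 1 := by
    have hsq : (a + 1) * (a - 1) = 0 :=
      (mul_eq_zero.1 hslope).resolve_right (mul_pos hb (sub_pos.2 hpx)).ne'
    rcases mul_eq_zero.1 hsq with ha' | ha' <;> linarith
  filter_upwards [hfa] with y hy
  rw [hy, ha1]
  ring

theorem isFixedPt_apply_iff_of_comp_eq {f h : ℝ → ℝ} (hf : Injective f) (hh : Injective h)
    (hrev : ∀ x, f (h (f x)) = h x) (x : ℝ) : IsFixedPt f (h x) ↔ IsFixedPt f x :=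
  ⟨fun hx => hh (hf ((hrev x).trans hx.symm)),
    fun hx => (congrArg (fun y => f (h y)) hx).symm.trans (hrev x)⟩

theorem isFixedPt_of_comp_eq {f h : ℝ → ℝ} (hf : StrictMono f) (hh : StrictMono h)
    (hrev : ∀ x, f (h (f x)) = h x) {p : ℝ} (hp : IsFixedPt h p) : IsFixedPt f p := by
  have hrevp : f (h (f p)) = p := (hrev p).trans hp
  rcases lt_trichotomy (f p) p with hlt | heq | hgt
  · have hcomp := hf ((hh hlt).trans_eq hp)
    rw [hrevp] at hcomp
    exact absurd hlt (lt_asymm hcomp)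
  · exact heq
  · have hcomp := hf (hp.symm.trans_lt (hh hgt))
    rw [hrevp] at hcomp
    exact absurd hgt (lt_asymm hcomp)

theorem exists_isFixedPt_of_comp_eq {f h : ℝ → ℝ} (hf : Continuous f) (hh : StrictMono h)
    (hrev : ∀ x, f (h (f x)) = h x) : ∃ x, f x = x := by
  by_contra! hnone
  have hclopen : IsClopen {x | x < f x} := by
    refine ⟨?_, isOpen_lt continuous_id hf⟩
    convert isClosed_le continuous_id hf using 1
    ext x
    exact (le_iff_lt_or_eq.trans (or_iff_left (hnone x).symm)).symm
  rcases isClopen_iff.1 hclopen with hempty | huniv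
  · have hlt : ∀ x, f x < x := fun x =>
      lt_of_le_of_ne (not_lt.1 fun hx => hempty.subset hx) (hnone x)
    exact ((hlt _).trans (hh (hlt 0))).ne (hrev 0)
  · have hgt : ∀ x, x < f x := fun x => huniv.symm.subset (mem_univ x)
    exact ((hh (hgt 0)).trans (hgt _)).ne' (hrev 0)

theorem Icc_subset_fixedPoints_iff {f h : ℝ → ℝ} (hmono : StrictMono h) (hsurj : Surjective h)
    (hfix : ∀ x, IsFixedPt f (h x) ↔ IsFixedPt f x) {p : ℝ} (hp : h p = p) (x : ℝ) :
    Icc p (h x) ⊆ fixedPoints f ↔ Icc p x ⊆ fixedPoints f := by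
  have himage : h '' Icc p x = Icc p (h x) := by
    simpa [hp] using (hmono.orderIsoOfSurjective h hsurj).image_Icc p x
  have hpre : h ⁻¹' fixedPoints f = fixedPoints f := ext hfix
  rw [← himage, image_subset_iff, hpre]

theorem PLplusR.isFixedPt_of_le {f h : ℝ → ℝ} (hf : PLplusR f) (hh : PLplusR h)
    (hrev : ∀ x, f (h (f x)) = h x) {p : ℝ} (hfp : f p = p) (hhp : h p = p) {x : ℝ}
    (hpx : p ≤ x) : f x = x := by
  have hinv := Icc_subset_fixedPoints_iff hh.2.1 hh.1.2
    (isFixedPt_apply_iff_of_comp_eq hf.1.1 hh.1.1 hrev) hhp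
  refine (isClosed_fixedPoints hf.continuous).inter isClosed_Icc
    |>.Icc_subset_of_forall_mem_nhdsGT_of_Icc_subset hfp (fun t ht hpt => ?_) ⟨hpx, le_rfl⟩
  rcases lt_trichotomy t (h t) with hlt | heq | hgt
  · exact mem_of_superset (Ioo_mem_nhdsGT hlt)
      (Ioo_subset_Icc_self.trans ((Icc_subset_Icc_left ht.1).trans ((hinv t).2 hpt)))
  · exact hf.eventually_isFixedPt_nhdsGT hh hrev (hpt ⟨ht.1, le_rfl⟩) heq.symm
  · obtain ⟨w, rfl⟩ := hh.1.2 t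
    have hw : h w < w := hh.2.1.lt_iff_lt.1 hgt
    exact mem_of_superset (Ioo_mem_nhdsGT hw)
      (Ioo_subset_Icc_self.trans ((Icc_subset_Icc_left ht.1).trans ((hinv w).1 hpt)))

theorem IsPLFun.neg_comp_neg {f : ℝ → ℝ} (hf : IsPLFun f) : IsPLFun fun x => -f (-x) := by
  obtain ⟨B, hB, haff⟩ := hf
  refine ⟨Neg.neg ⁻¹' B, fun r => ?_, fun x hx => ?_⟩
  · have hIcc : Neg.neg ⁻¹' Icc (-r) r = Icc (-r) r := by ext; simp [and_comm]
    rw [← hIcc, ← preimage_inter]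
    exact (hB r).preimage neg_injective.injOn
  · obtain ⟨a, b, hab⟩ := haff (-x) hx
    refine ⟨a, -b, ?_⟩
    filter_upwards [(continuous_neg.tendsto x).eventually hab] with y hy
    rw [hy]
    ring

theorem PLplusR.neg_comp_neg {f : ℝ → ℝ} (hf : PLplusR f) : PLplusR fun x => -f (-x) :=
  ⟨neg_bijective.comp (hf.1.comp neg_bijective),
    (hf.2.1.comp_strictAnti fun _ _ => neg_lt_neg).neg, hf.2.2.neg_comp_neg⟩

theorem PLplusR.eq_id_of_comp_eq_of_isFixedPt {f h : ℝ → ℝ} (hf : PLplusR f) (hh : PLplusR h)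
    (hrev : ∀ x, f (h (f x)) = h x) {p : ℝ} (hhp : IsFixedPt h p) : f = id := by
  have hfp : f p = p := isFixedPt_of_comp_eq hf.2.1 hh.2.1 hrev hhp
  funext x
  rcases le_total p x with hpx | hxp
  · exact hf.isFixedPt_of_le hh hrev hfp hhp hpx
  · have hneg := hf.neg_comp_neg.isFixedPt_of_le hh.neg_comp_neg (by simp [hrev])
      (p := -p) (by simp [hfp]) (by simp [hhp.eq]) (neg_le_neg hxp)
    simpa using hneg

/-- Let `f, h ∈ PL⁺(ℝ)` with `h f h⁻¹ = f⁻¹` (equivalently `f ∘ h ∘ f = h`) and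
`f ≠ id`.  Then `f` has a fixed point and `h` has no fixed point. -/
theorem reversible_PLplusR_fixed_points (f h : ℝ → ℝ)
    (hf : PLplusR f) (hh : PLplusR h)
    (hrev : ∀ x : ℝ, f (h (f x)) = h x)
    (hne : ∃ x : ℝ, f x ≠ x) :
    (∃ x : ℝ, f x = x) ∧ ∀ x : ℝ, h x ≠ x := by
  refine ⟨exists_isFixedPt_of_comp_eq hf.continuous hh.2.1 hrev, fun p hp => ?_⟩
  obtain ⟨x, hx⟩ := hne
  exact hx (congrFun (hf.eq_id_of_comp_eq_of_isFixedPt hh hrev hp) x)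
end

section
/- Let f and h be orientation-preserving homeomorphisms of ℝ with hfh⁻¹ = f⁻¹, and let I be an interval with f(I) = I and h(I) = I. If f is not the identity on I, then f has a fixed point in I. -/
/-- Let `f` and `h` be orientation-preserving homeomorphisms of `ℝ` (i.e. strictly
increasing bijections of the line) with `h f h⁻¹ = f⁻¹` (equivalently `f ∘ h ∘ f = h`),
and let `I` be an interval with `f(I) = I` and `h(I) = I`.
If `f` is not the identity on `I`, then `f` has a fixed point in `I`. -/
theorem reversible_fixed_point_in_invariant_interval (f h : ℝ → ℝ)
    (hf : Function.Bijective f) (hfmono : StrictMono f)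
    (hh : Function.Bijective h) (hhmono : StrictMono h)
    (hrev : ∀ x : ℝ, f (h (f x)) = h x)
    (I : Set ℝ) (hI : I.OrdConnected)
    (hfI : f '' I = I) (hhI : h '' I = I)
    (hne : ∃ x ∈ I, f x ≠ x) :
    ∃ x ∈ I, f x = x := by
  by_contra hcon
  push_neg at hcon
  obtain ⟨x0, hx0I, -⟩ := hne
  have hfc : Continuous f := (StrictMono.orderIsoOfSurjective f hfmono hf.2).continuous
  have hmapf : ∀ x ∈ I, f x ∈ I := fun x hx => hfI ▸ Set.mem_image_of_mem f hx
  have hmaph : ∀ x ∈ I, h x ∈ I := fun x hx => hhI ▸ Set.mem_image_of_mem h hx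
  -- sign of f x - x is constant on I
  have hsign : (∀ x ∈ I, x < f x) ∨ (∀ x ∈ I, f x < x) := by
    by_contra hs
    push_neg at hs
    obtain ⟨⟨a, haI, ha⟩, ⟨b, hbI, hb⟩⟩ := hs
    have ha' : f a < a := lt_of_le_of_ne ha (hcon a haI)
    have hb' : b < f b := hb.lt_of_ne (fun e => hcon b hbI e.symm)
    -- continuous g := f x - x changes sign between a and b
    have hg : Continuous fun x => f x - x := hfc.sub continuous_id
    rcases le_total a b with hab | hab
    · have hsub : Set.Icc a b ⊆ I := hI.out haI hbI
      have : (0 : ℝ) ∈ Set.Icc (f a - a) (f b - b) ∨ True := Or.inr trivial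
      obtain ⟨c, hc, hc0⟩ := intermediate_value_Icc hab hg.continuousOn
        (Set.mem_Icc.mpr ⟨by linarith, by linarith⟩ : (0:ℝ) ∈ Set.Icc (f a - a) (f b - b))
      exact hcon c (hsub hc) (by linarith [sub_eq_zero.mp hc0])
    · have hsub : Set.Icc b a ⊆ I := hI.out hbI haI
      obtain ⟨c, hc, hc0⟩ := intermediate_value_Icc' hab hg.continuousOn
        (Set.mem_Icc.mpr ⟨by linarith, by linarith⟩ : (0:ℝ) ∈ Set.Icc (f a - a) (f b - b))
      exact hcon c (hsub hc) (by linarith [sub_eq_zero.mp hc0])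
  rcases hsign with hpos | hneg
  · have h1 : x0 < f x0 := hpos x0 hx0I
    have h2 : h x0 < h (f x0) := hhmono h1
    have h3 : h (f x0) < f (h (f x0)) := hpos _ (hmaph _ (hmapf _ hx0I))
    rw [hrev] at h3
    linarith
  · have h1 : f x0 < x0 := hneg x0 hx0I
    have h2 : h (f x0) < h x0 := hhmono h1
    have h3 : f (h (f x0)) < h (f x0) := hneg _ (hmaph _ (hmapf _ hx0I))
    rw [hrev] at h3
    linarith
end

section
/- Every involution τ ≠ id in the group PL⁺(S¹) of orientation-preserving piecewise linear homeomorphisms of the circle is conjugate within PL⁺(S¹) (indeed within PL(S¹)) to the rotation r_π : z ↦ −z. -/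
open Set Real Filter

/-- `F : ℝ → ℝ` is a lift of the circle map `f` with degree `k`. -/
def IsLift (f : Circle → Circle) (F : ℝ → ℝ) (k : ℝ) : Prop :=
  (∀ x : ℝ, f (Circle.exp (2 * π * x)) = Circle.exp (2 * π * F x)) ∧
    ∀ x : ℝ, F (x + 1) = F x + k

/-- orientation-preserving piecewise linear homeomorphism of the circle -/
def PLplus (f : Circle ≃ₜ Circle) : Prop :=
  ∃ F : ℝ → ℝ, StrictMono F ∧ IsPLFun F ∧ IsLift f F 1

/-- orientation-reversing piecewise linear homeomorphism of the circle -/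
def PLminus (f : Circle ≃ₜ Circle) : Prop :=
  ∃ F : ℝ → ℝ, StrictAnti F ∧ IsPLFun F ∧ IsLift f F (-1)

/-- piecewise linear homeomorphism of the circle -/
def PLcirc (f : Circle ≃ₜ Circle) : Prop := PLplus f ∨ PLminus f

/-! ### Auxiliary lemmas -/

lemma exp2pi_eq_iff {x y : ℝ} :
    Circle.exp (2 * π * x) = Circle.exp (2 * π * y) ↔ ∃ n : ℤ, x = y + n := by
  rw [Circle.exp_eq_exp]
  constructor
  · rintro ⟨m, hm⟩
    refine ⟨m, mul_left_cancel₀ (a := 2 * π) (by positivity) ?_⟩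
    rw [hm]; ring
  · rintro ⟨n, hn⟩
    exact ⟨n, by rw [hn]; ring⟩

lemma exp2pi_surjective (z : Circle) : ∃ x : ℝ, Circle.exp (2 * π * x) = z := by
  refine ⟨Complex.arg z / (2 * π), ?_⟩
  rw [mul_div_cancel₀ _ (by positivity), Circle.exp_arg]

/-- periodicity extends to integer translations -/
lemma translate_int {F : ℝ → ℝ} (h : ∀ x, F (x + 1) = F x + 1) :
    ∀ (x : ℝ) (n : ℤ), F (x + n) = F x + n := by
  have hup : ∀ (x : ℝ) (k : ℕ), F (x + k) = F x + k := by
    intro x k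
    induction k with
    | zero => simp
    | succ k ih =>
        push_cast
        rw [show x + ((k : ℝ) + 1) = (x + k) + 1 by ring, h, ih]
        ring
  have hdown : ∀ (x : ℝ) (k : ℕ), F (x - k) = F x - k := by
    intro x k
    have := hup (x - k) k
    rw [sub_add_cancel] at this
    linarith
  intro x n
  obtain ⟨k, rfl | rfl⟩ := n.eq_nat_or_neg
  · push_cast; exact hup x k
  · push_cast
    rw [show x + -(k : ℝ) = x - k by ring, hdown]
    ring


lemma coe_add_int_mul (x : ℝ) (n : ℤ) :
    ((x + n * (2*π) : ℝ) : AddCircle (2*π)) = (x : AddCircle (2*π)) := by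
  rw [← zsmul_eq_mul]
  simp

noncomputable def circleHat (f : ℝ → ℝ)
    (hf : ∀ (x : ℝ) (n : ℤ), f (x + n * (2*π)) = f x + n * (2*π)) :
    AddCircle (2*π) → AddCircle (2*π) :=
  fun q => Quotient.liftOn' q (fun x => (f x : AddCircle (2*π))) (by
    intro a b hab
    have h := QuotientAddGroup.leftRel_apply.mp hab
    obtain ⟨n, hn⟩ := AddSubgroup.mem_zmultiples_iff.mp h
    rw [zsmul_eq_mul] at hn
    have hb : b = a + n * (2*π) := by linarith
    simp only [hb, hf, coe_add_int_mul])

@[simp] lemma circleHat_coe (f : ℝ → ℝ) (hf) (x : ℝ) :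
    circleHat f hf (x : AddCircle (2*π)) = ((f x : ℝ) : AddCircle (2*π)) := rfl

lemma circleHat_continuous (f : ℝ → ℝ) (hf) (hc : Continuous f) :
    Continuous (circleHat f hf) :=
  Continuous.quotient_liftOn' (continuous_quotient_mk'.comp hc) _

noncomputable def circleHomeo (g h : ℝ → ℝ)
    (hgper : ∀ (x : ℝ) (n : ℤ), g (x + n * (2*π)) = g x + n * (2*π))
    (hhper : ∀ (x : ℝ) (n : ℤ), h (x + n * (2*π)) = h x + n * (2*π))
    (hgc : Continuous g) (hhc : Continuous h)
    (hgh : ∀ x, g (h x) = x) (hhg : ∀ x, h (g x) = x) :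
    AddCircle (2*π) ≃ₜ AddCircle (2*π) where
  toFun := circleHat g hgper
  invFun := circleHat h hhper
  left_inv := by
    intro q
    induction q using QuotientAddGroup.induction_on with
    | H x => simp [hhg]
  right_inv := by
    intro q
    induction q using QuotientAddGroup.induction_on with
    | H x => simp [hgh]
  continuous_toFun := circleHat_continuous g hgper hgc
  continuous_invFun := circleHat_continuous h hhper hhc

@[simp] lemma circleHomeo_apply (g h : ℝ → ℝ) (hgper) (hhper) (hgc) (hhc) (hgh) (hhg) (q) :
    circleHomeo g h hgper hhper hgc hhc hgh hhg q = circleHat g hgper q := rfl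

@[simp] lemma circleHomeo_symm_apply (g h : ℝ → ℝ) (hgper) (hhper) (hgc) (hhc) (hgh) (hhg) (q) :
    (circleHomeo g h hgper hhper hgc hhc hgh hhg).symm q = circleHat h hhper q := rfl


/-- Every involution `τ ≠ id` in `PL⁺(S¹)` is conjugate within `PL⁺(S¹)` to the
rotation `r_π : z ↦ -z` (multiplication by `-1 = exp(iπ)`). -/
theorem involution_PLplus_conjugate_to_half_turn (τ : Circle ≃ₜ Circle)
    (hτ : PLplus τ) (hinv : ∀ z : Circle, τ (τ z) = z)
    (hne : ∃ z : Circle, τ z ≠ z) :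
    ∃ ψ : Circle ≃ₜ Circle, PLplus ψ ∧
      ∀ z : Circle, τ z = ψ (Circle.exp π * ψ.symm z) := by
  obtain ⟨F, hFmono, hFPL, hFlift, hFper⟩ := hτ
  have hFint : ∀ (x : ℝ) (n : ℤ), F (x + n) = F x + n := translate_int hFper
  -- F is surjective
  have hFsurj : Function.Surjective F := by
    intro y
    obtain ⟨z, hz⟩ := τ.surjective (Circle.exp (2 * π * y))
    obtain ⟨x, hx⟩ := exp2pi_surjective z
    have : Circle.exp (2 * π * F x) = Circle.exp (2 * π * y) := by
      rw [← hFlift, hx, hz]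
    obtain ⟨n, hn⟩ := exp2pi_eq_iff.mp this
    exact ⟨x + (-n : ℤ), by rw [hFint, hn]; push_cast; ring⟩
  have hFcont : Continuous F := hFmono.monotone.continuous_of_surjective hFsurj
  -- F ∘ F is translation by an integer m
  have hFF : ∀ x : ℝ, ∃ n : ℤ, F (F x) = x + n := by
    intro x
    have h1 : Circle.exp (2 * π * F (F x)) = Circle.exp (2 * π * x) := by
      rw [← hFlift, ← hFlift, hinv]
    obtain ⟨n, hn⟩ := exp2pi_eq_iff.mp h1
    exact ⟨n, hn⟩
  have hgcont : Continuous fun x => F (F x) - x :=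
    (hFcont.comp hFcont).sub continuous_id
  have hkey : ∀ x y : ℝ, ∀ nx ny : ℤ, F (F x) = x + nx → F (F y) = y + ny →
      ¬ (nx < ny) := by
    intro x y nx ny hnx hny hlt
    have hxv : F (F x) - x = (nx : ℝ) := by rw [hnx]; ring
    have hyv : F (F y) - y = (ny : ℝ) := by rw [hny]; ring
    have hmem : ((nx : ℝ) + 1 / 2) ∈ Set.range fun x => F (F x) - x := by
      apply intermediate_value_univ x y hgcont
      have : (nx : ℝ) + 1 ≤ (ny : ℝ) := by exact_mod_cast hlt
      simp only [hxv, hyv, Set.mem_Icc]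
      constructor <;> linarith
    obtain ⟨c, hc⟩ := hmem
    obtain ⟨nc, hnc⟩ := hFF c
    have hcv : (nc : ℝ) = (nx : ℝ) + 1 / 2 := by
      have hc' : F (F c) - c = (nx : ℝ) + 1 / 2 := hc
      rw [hnc] at hc'
      linarith
    have h2 : ((2 * nc : ℤ) : ℝ) = ((2 * nx + 1 : ℤ) : ℝ) := by push_cast; linarith
    have := Int.cast_injective (α := ℝ) h2
    omega
  -- so F ∘ F is translation by a fixed integer m
  obtain ⟨m, hm0⟩ := hFF 0
  have hm : ∀ x : ℝ, F (F x) = x + m := by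
    intro x
    obtain ⟨n, hn⟩ := hFF x
    have h1 := hkey x 0 n m hn hm0
    have h2 := hkey 0 x m n hm0 hn
    have : n = m := by omega
    rw [hn, this]
  -- m is odd
  have hmodd : ∃ k : ℤ, m = 2 * k + 1 := by
    rcases Int.even_or_odd m with ⟨j, hj⟩ | ⟨j, hj⟩
    · exfalso
      -- then F x = x + j and τ = id
      have hFid : ∀ x : ℝ, F x = x + j := by
        intro x
        rcases lt_trichotomy (F x) (x + j) with h | h | h
        · exfalso
          have h1 : F (F x) < F (x + j) := hFmono h
          rw [hm, hFint] at h1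
          have : (m : ℝ) = 2 * j := by rw [hj]; push_cast; ring
          linarith
        · exact h
        · exfalso
          have h1 : F (x + j) < F (F x) := hFmono h
          rw [hm, hFint] at h1
          have : (m : ℝ) = 2 * j := by rw [hj]; push_cast; ring
          linarith
      obtain ⟨z, hz⟩ := hne
      apply hz
      obtain ⟨x, hx⟩ := exp2pi_surjective z
      rw [← hx, hFlift, hFid]
      exact exp2pi_eq_iff.mpr ⟨j, rfl⟩
    · exact ⟨j, hj⟩
  obtain ⟨k, hk⟩ := hmodd
  -- the conjugating lift H
  set H : ℝ → ℝ := fun x => (x + F x) / 2 with hHdef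
  have hHmono : StrictMono H := fun a b hab => by
    have := hFmono hab
    simp only [hHdef]
    linarith
  have hHcont : Continuous H := by
    simp only [hHdef]
    fun_prop
  have hHper : ∀ x : ℝ, H (x + 1) = H x + 1 := by
    intro x
    simp only [hHdef, hFper]
    ring
  have hHint : ∀ (x : ℝ) (n : ℤ), H (x + n) = H x + n := translate_int hHper
  have hHF : ∀ x : ℝ, H (F x) = H x + (m : ℝ) / 2 := by
    intro x
    simp only [hHdef, hm]
    ring
  have hHsurj : Function.Surjective H := by
    intro y
    obtain ⟨n, hn⟩ := exists_nat_ge (|y - H 0| + 1)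
    have habs : |y - H 0| ≤ ((n : ℤ) : ℝ) := by push_cast; linarith
    obtain ⟨ha1, ha2⟩ := abs_le.mp habs
    have h1 : H (0 + ((-(n : ℤ) : ℤ) : ℝ)) ≤ y := by
      rw [hHint]
      push_cast
      push_cast at ha1
      linarith
    have h2 : y ≤ H (0 + (((n : ℤ) : ℤ) : ℝ)) := by
      rw [hHint]
      push_cast
      push_cast at ha2
      linarith
    exact intermediate_value_univ _ _ hHcont (Set.mem_Icc.mpr ⟨h1, h2⟩)
  -- the inverse G of H
  set E := StrictMono.orderIsoOfSurjective H hHmono hHsurj with hEdef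
  set G : ℝ → ℝ := fun y => E.symm y with hGdef
  have hGH : ∀ x : ℝ, G (H x) = x := fun x => by
    simp only [hGdef, hEdef]
    exact StrictMono.orderIsoOfSurjective_symm_apply_self H hHmono hHsurj x
  have hHG : ∀ y : ℝ, H (G y) = y := fun y => by
    simp only [hGdef, hEdef]
    exact StrictMono.orderIsoOfSurjective_self_symm_apply H hHmono hHsurj y
  have hGmono : StrictMono G := fun a b hab => E.symm.strictMono hab
  have hGcont : Continuous G := by
    have : Continuous (E.symm : ℝ → ℝ) := OrderIso.continuous _
    exact this
  have hGper : ∀ y : ℝ, G (y + 1) = G y + 1 := by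
    intro y
    apply hHmono.injective
    rw [hHG (y + 1), hHper (G y), hHG y]
  have hGint : ∀ (y : ℝ) (n : ℤ), G (y + n) = G y + n := translate_int hGper
  -- G is piecewise linear
  obtain ⟨B, hBfin, hBaff⟩ := hFPL
  have hGPL : IsPLFun G := by
    refine ⟨H '' B, ?_, ?_⟩
    · intro r
      set s := max |G (-r)| |G r| with hsdef
      have hsub : H '' B ∩ Set.Icc (-r) r ⊆ H '' (B ∩ Set.Icc (-s) s) := by
        rintro y ⟨⟨xx, hxxB, rfl⟩, hy⟩
        refine ⟨xx, ⟨hxxB, ?_⟩, rfl⟩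
        obtain ⟨hy1, hy2⟩ := Set.mem_Icc.mp hy
        have h1 : G (-r) ≤ xx := by
          have := hGmono.monotone hy1
          rwa [hGH] at this
        have h2 : xx ≤ G r := by
          have := hGmono.monotone hy2
          rwa [hGH] at this
        rw [Set.mem_Icc]
        constructor
        · have ha := neg_abs_le (G (-r))
          have hb := le_max_left |G (-r)| |G r|
          simp only [hsdef]
          linarith
        · have ha := le_abs_self (G r)
          have hb := le_max_right |G (-r)| |G r|
          simp only [hsdef]
          linarith
      exact ((hBfin s).image H).subset hsub
    · intro y hy
      have hxB : G y ∉ B := by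
        intro hxB
        exact hy ⟨G y, hxB, hHG y⟩
      obtain ⟨a, b, hab⟩ := hBaff (G y) hxB
      obtain ⟨ε, hε, hball⟩ := Metric.eventually_nhds_iff.mp hab
      have ha : 0 < a := by
        have h1 : F (G y) = a * G y + b := hball (by simpa using hε)
        have h2 : F (G y + ε / 2) = a * (G y + ε / 2) + b := by
          apply hball
          rw [Real.dist_eq]
          rw [show G y + ε / 2 - G y = ε / 2 by ring, abs_of_pos (by linarith)]
          linarith
        have h3 : F (G y) < F (G y + ε / 2) := hFmono (by linarith)
        nlinarith
      have h1a : (1 : ℝ) + a ≠ 0 := by positivity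
      refine ⟨2 / (1 + a), -b / (1 + a), ?_⟩
      have hGev : ∀ᶠ w in nhds y, F (G w) = a * G w + b :=
        (hGcont.continuousAt).eventually hab
      filter_upwards [hGev] with w hw
      have hHw : (G w + F (G w)) / 2 = w := hHG w
      rw [hw] at hHw
      field_simp
      linarith
  -- transfer everything to the circle
  have hπ : (2 * π) ≠ 0 := by positivity
  set H₂ : ℝ → ℝ := fun x => 2 * π * H (x / (2 * π)) with hH2def
  set G₂ : ℝ → ℝ := fun x => 2 * π * G (x / (2 * π)) with hG2def
  have hH2x : ∀ x : ℝ, H₂ (2 * π * x) = 2 * π * H x := by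
    intro x
    simp only [hH2def, mul_div_cancel_left₀ _ hπ]
  have hG2x : ∀ x : ℝ, G₂ (2 * π * x) = 2 * π * G x := by
    intro x
    simp only [hG2def, mul_div_cancel_left₀ _ hπ]
  have hH2G2 : ∀ x : ℝ, H₂ (G₂ x) = x := by
    intro x
    show H₂ (2 * π * G (x / (2 * π))) = x
    rw [hH2x, hHG, mul_comm, div_mul_cancel₀ _ hπ]
  have hG2H2 : ∀ x : ℝ, G₂ (H₂ x) = x := by
    intro x
    show G₂ (2 * π * H (x / (2 * π))) = x
    rw [hG2x, hGH, mul_comm, div_mul_cancel₀ _ hπ]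
  have hH2per : ∀ (x : ℝ) (n : ℤ), H₂ (x + n * (2 * π)) = H₂ x + n * (2 * π) := by
    intro x n
    have hd : (x + n * (2 * π)) / (2 * π) = x / (2 * π) + n := by field_simp
    simp only [hH2def, hd, hHint]
    ring
  have hG2per : ∀ (x : ℝ) (n : ℤ), G₂ (x + n * (2 * π)) = G₂ x + n * (2 * π) := by
    intro x n
    have hd : (x + n * (2 * π)) / (2 * π) = x / (2 * π) + n := by field_simp
    simp only [hG2def, hd, hGint]
    ring
  have hH2cont : Continuous H₂ :=
    continuous_const.mul (hHcont.comp (continuous_id.div_const _))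
  have hG2cont : Continuous G₂ :=
    continuous_const.mul (hGcont.comp (continuous_id.div_const _))
  set ψ : Circle ≃ₜ Circle := AddCircle.homeomorphCircle'.symm.trans
    ((circleHomeo G₂ H₂ hG2per hH2per hG2cont hH2cont hG2H2 hH2G2).trans
      AddCircle.homeomorphCircle') with hψdef
  have hcs : ∀ θ : ℝ, AddCircle.homeomorphCircle'.symm (Circle.exp θ)
      = (θ : AddCircle (2 * π)) := by
    intro θ
    rw [← AddCircle.homeomorphCircle'_apply_mk, Homeomorph.symm_apply_apply]
  have hψexp : ∀ θ : ℝ, ψ (Circle.exp θ) = Circle.exp (G₂ θ) := by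
    intro θ
    simp only [hψdef, Homeomorph.trans_apply]
    rw [hcs, circleHomeo_apply, circleHat_coe, AddCircle.homeomorphCircle'_apply_mk]
  have hψsymm : ∀ θ : ℝ, ψ.symm (Circle.exp θ) = Circle.exp (H₂ θ) := by
    intro θ
    simp only [hψdef, Homeomorph.symm_trans_apply, Homeomorph.symm_symm]
    rw [hcs, circleHomeo_symm_apply, circleHat_coe, AddCircle.homeomorphCircle'_apply_mk]
  refine ⟨ψ, ⟨G, hGmono, hGPL, ?_, hGper⟩, ?_⟩
  · intro x
    rw [hψexp, hG2x]
  · intro z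
    obtain ⟨x, rfl⟩ := exp2pi_surjective z
    rw [hψsymm (2 * π * x), hH2x, ← Circle.exp_add,
      show π + 2 * π * H x = 2 * π * (H x + 1 / 2) by ring, hψexp, hG2x, hFlift]
    apply exp2pi_eq_iff.mpr
    refine ⟨k, ?_⟩
    have h1 : H x + 1 / 2 = H (F x) + ((-k : ℤ) : ℝ) := by
      rw [hHF, hk]
      push_cast
      ring
    rw [h1, hGint, hGH]
    push_cast
    ring
end

section
/- Let f be an orientation-preserving homeomorphism of the circle with a fixed point, and let g be a homeomorphism of the circle with a fixed point such that fg = gf. Then f and g have a common fixed point. -/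
open Set Real Filter

/-- Let `f` be an orientation-preserving homeomorphism of the circle with a fixed
point, and `g` a homeomorphism of the circle with a fixed point such that
`f ∘ g = g ∘ f`.  Then `f` and `g` have a common fixed point. -/
theorem commuting_circle_homeos_common_fixed_point (f g : Circle ≃ₜ Circle)
    (hf : ∃ F : ℝ → ℝ, StrictMono F ∧ IsLift f F 1)
    (hfix : ∃ z : Circle, f z = z) (hgix : ∃ z : Circle, g z = z)
    (hcomm : ∀ z : Circle, f (g z) = g (f z)) :
    ∃ z : Circle, f z = z ∧ g z = z := by
  obtain ⟨F, hFmono, hFlift, hFper⟩ := hf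
  obtain ⟨z0, hz0⟩ := hfix
  obtain ⟨z1, hz1⟩ := hgix
  have hsurj : ∀ z : Circle, ∃ x : ℝ, Circle.exp (2*π*x) = z := by
    intro z
    refine ⟨Complex.arg z / (2*π), ?_⟩
    rw [mul_div_cancel₀, Circle.exp_arg]
    positivity
  obtain ⟨x0, hx0⟩ := hsurj z0
  obtain ⟨y0, hy0⟩ := hsurj z1
  -- F x0 = x0 + m
  have hFx0 : Circle.exp (2*π*F x0) = Circle.exp (2*π*x0) := by
    rw [← hFlift, hx0, hz0]
  obtain ⟨m, hm⟩ : ∃ m : ℤ, F x0 = x0 + m := by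
    obtain ⟨m, hm⟩ := Circle.exp_eq_exp.mp hFx0
    refine ⟨m, ?_⟩
    nlinarith [hm, Real.pi_pos]
  set G : ℝ → ℝ := fun x => F x - m with hGdef
  have hGmono : StrictMono G := fun a b hab => by
    simpa [hGdef] using hFmono hab
  have hGper : ∀ x, G (x + 1) = G x + 1 := fun x => by
    simp only [hGdef, hFper x]; ring
  have hGx0 : G x0 = x0 := by simp [hGdef, hm]
  have hGlift : ∀ x, f (Circle.exp (2*π*x)) = Circle.exp (2*π*G x) := by
    intro x
    rw [hFlift x]
    exact (Circle.exp_eq_exp.mpr ⟨-m, by simp only [hGdef]; push_cast; ring⟩).symm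
  -- integer periodicity
  have hGZ : ∀ (j : ℤ) (x : ℝ), G (x + j) = G x + j := by
    have hper : Function.Periodic (fun x => G x - x) 1 := fun x => by
      simp [hGper x]
    intro j x
    have h2 : G (x + j) - (x + j) = G x - x := by simpa using (hper.int_mul j) x
    linarith
  -- fixed endpoints
  set k : ℤ := ⌈y0 - x0⌉ with hk
  set a : ℝ := x0 + (k - 1 : ℤ) with ha
  set b : ℝ := x0 + (k : ℤ) with hb
  have hGa : G a = a := by rw [ha, hGZ, hGx0]
  have hGb : G b = b := by rw [hb, hGZ, hGx0]
  have hy0mem : y0 ∈ Icc a b := by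
    constructor
    · have h1 : ((k : ℤ) : ℝ) < y0 - x0 + 1 := by
        rw [hk]; exact_mod_cast Int.ceil_lt_add_one (y0 - x0)
      have h2 : a = x0 + ((k : ℝ) - 1) := by rw [ha]; push_cast; ring
      rw [h2]; linarith
    · have h1 : y0 - x0 ≤ ((k : ℤ) : ℝ) := by rw [hk]; exact Int.le_ceil (y0 - x0)
      rw [hb]; linarith
  -- the sequence
  set s : ℕ → ℝ := fun n => G^[n] y0 with hs
  have hGmem : ∀ y ∈ Icc a b, G y ∈ Icc a b := by
    intro y hy
    constructor
    · rw [← hGa]; exact hGmono.monotone hy.1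
    · rw [← hGb]; exact hGmono.monotone hy.2
  have hmem : ∀ n, s n ∈ Icc a b := by
    intro n
    induction n with
    | zero => simpa [hs] using hy0mem
    | succ n ih =>
      have : s (n+1) = G (s n) := by
        simp [hs, Function.iterate_succ_apply']
      rw [this]; exact hGmem _ ih
  have hstep : ∀ n, s (n+1) = G (s n) := fun n => by
    simp [hs, Function.iterate_succ_apply']
  -- convergence
  have hconv : ∃ L, Tendsto s atTop (nhds L) := by
    rcases le_total y0 (G y0) with h | h
    · have hmono : Monotone s := by
        apply monotone_nat_of_le_succ
        intro n
        rw [hstep]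
        have h1 : G^[n] (G y0) = G (s n) := by
          rw [← Function.iterate_succ_apply, Function.iterate_succ_apply']
        exact h1 ▸ (hGmono.monotone.iterate n) h
      rcases tendsto_of_monotone hmono with h2 | h2
      · exfalso
        obtain ⟨n, hn⟩ := (h2.eventually_gt_atTop b).exists
        exact absurd (hmem n).2 (not_le.mpr hn)
      · exact h2
    · have hanti : Antitone s := by
        apply antitone_nat_of_succ_le
        intro n
        rw [hstep]
        have h1 : G^[n] (G y0) = G (s n) := by
          rw [← Function.iterate_succ_apply, Function.iterate_succ_apply']
        exact h1 ▸ (hGmono.monotone.iterate n) h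
      rcases tendsto_of_antitone hanti with h2 | h2
      · exfalso
        obtain ⟨n, hn⟩ := (h2.eventually_lt_atBot a).exists
        exact absurd (hmem n).1 (not_le.mpr hn)
      · exact h2
  obtain ⟨L, hL⟩ := hconv
  have hc : Continuous fun x : ℝ => Circle.exp (2*π*x) :=
    Circle.exp.continuous.comp (continuous_const.mul continuous_id)
  have h1 : Tendsto (fun n => Circle.exp (2*π*(s n))) atTop (nhds (Circle.exp (2*π*L))) :=
    (hc.tendsto L).comp hL
  refine ⟨Circle.exp (2*π*L), ?_, ?_⟩
  · -- f fixes the limit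
    have h2 : Tendsto (fun n => f (Circle.exp (2*π*(s n)))) atTop
        (nhds (f (Circle.exp (2*π*L)))) :=
      (f.continuous.tendsto _).comp h1
    have h3 : (fun n => f (Circle.exp (2*π*(s n)))) = fun n => Circle.exp (2*π*(s (n+1))) := by
      funext n
      rw [hGlift, hstep]
    rw [h3] at h2
    have h4 : Tendsto (fun n => Circle.exp (2*π*(s (n+1)))) atTop (nhds (Circle.exp (2*π*L))) :=
      h1.comp (tendsto_add_atTop_nat 1)
    exact tendsto_nhds_unique h2 h4
  · -- g fixes the limit
    have hfix_g : ∀ n, g (Circle.exp (2*π*(s n))) = Circle.exp (2*π*(s n)) := by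
      intro n
      induction n with
      | zero => simpa [hs, hy0] using hz1
      | succ n ih =>
        have he : Circle.exp (2*π*(s (n+1))) = f (Circle.exp (2*π*(s n))) := by
          rw [hGlift, hstep]
        rw [he, ← hcomm, ih]
    have h2 : Tendsto (fun n => g (Circle.exp (2*π*(s n)))) atTop
        (nhds (g (Circle.exp (2*π*L)))) :=
      (g.continuous.tendsto _).comp h1
    have h3 : (fun n => g (Circle.exp (2*π*(s n)))) = fun n => Circle.exp (2*π*(s n)) :=
      funext hfix_g
    rw [h3] at h2
    exact tendsto_nhds_unique h2 h1
end

section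
/- Let f be an orientation-preserving piecewise linear homeomorphism of the circle with rotation number 0. Then f admits a lift f̃ ∈ PL⁺(ℝ) such that f̃ is strongly reversible in PL(ℝ) by an orientation-reversing piecewise linear involution; i.e., there is an involution τ ∈ PL⁻(ℝ) with τ f̃ τ = f̃⁻¹. -/
/-!
Shift the given lift by an integer so that `F x₀ = x₀ + 1` at a point `x₀` over a fixed point of
`f`. As `F` commutes with `x ↦ x + 1`, it maps each interval `[x₀ + k, x₀ + k + 1)` onto the next
one, so transporting the fundamental domain `[x₀, x₀ + 1)` along the powers of `F` yields a PL
homeomorphism `h` with `h ∘ F = h + 1`. The translation by `1` is reversed by `y ↦ -y`, hence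
`τ = h⁻¹ ∘ (-·) ∘ h` is an orientation-reversing PL involution reversing `F`.
-/

open Set Real Filter

open Topology

def IsLocallyAffineAt (f : ℝ → ℝ) (x : ℝ) : Prop :=
  ∃ a b : ℝ, ∀ᶠ y in 𝓝 x, f y = a * y + b

def breakPoints (f : ℝ → ℝ) : Set ℝ := {x | ¬ IsLocallyAffineAt f x}

namespace IsLocallyAffineAt

variable {f g : ℝ → ℝ} {x : ℝ}

lemma congr (hf : IsLocallyAffineAt f x) (h : f =ᶠ[𝓝 x] g) : IsLocallyAffineAt g x := by
  obtain ⟨a, b, hab⟩ := hf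
  exact ⟨a, b, by filter_upwards [h, hab] with y hfg hy using hfg ▸ hy⟩

lemma comp (hg : IsLocallyAffineAt g (f x)) (hf : IsLocallyAffineAt f x)
    (hc : ContinuousAt f x) : IsLocallyAffineAt (g ∘ f) x := by
  obtain ⟨a, b, hab⟩ := hf
  obtain ⟨c, d, hcd⟩ := hg
  refine ⟨c * a, c * b + d, ?_⟩
  filter_upwards [hab, hc.eventually hcd] with y hf hg
  rw [Function.comp_apply, hg, hf]
  ring

lemma orderIso_symm (e : ℝ ≃o ℝ) {y : ℝ} (he : IsLocallyAffineAt e (e.symm y)) :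
    IsLocallyAffineAt e.symm y := by
  obtain ⟨a, b, hab⟩ := he
  have ha : a ≠ 0 := by
    rintro rfl
    obtain ⟨z, hz, hez⟩ := hab.exists_gt
    have := e.strictMono hz
    rw [hez, hab.self_of_nhds] at this
    simp at this
  refine ⟨a⁻¹, -b / a, ?_⟩
  filter_upwards [e.symm.continuous.continuousAt.eventually hab] with z hz
  rw [e.apply_symm_apply] at hz
  field_simp
  linarith

end IsLocallyAffineAt

lemma isPLFun_iff_breakPoints {f : ℝ → ℝ} :
    IsPLFun f ↔ ∀ x, ∃ U ∈ 𝓝 x, (breakPoints f ∩ U).Finite := by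
  constructor
  · rintro ⟨B, hB, haff⟩ x
    have hsub : breakPoints f ⊆ B := fun y hy => by_contra fun hyB => hy (haff y hyB)
    refine ⟨Icc (-(|x| + 1)) (|x| + 1), Icc_mem_nhds ?_ ?_, (hB (|x| + 1)).subset ?_⟩
    · linarith [neg_abs_le x]
    · linarith [le_abs_self x]
    · exact Set.inter_subset_inter_left _ hsub
  · intro hloc
    refine ⟨breakPoints f, fun r => ?_, fun x hx => not_not.mp hx⟩
    choose U hU hfin using hloc
    obtain ⟨t, -, hcover⟩ := isCompact_Icc.elim_nhds_subcover U fun x _ => hU x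
    refine (t.finite_toSet.biUnion fun x _ => hfin x).subset ?_
    rintro y ⟨hyB, hy⟩
    obtain ⟨x, hx, hyU⟩ := Set.mem_iUnion₂.mp (hcover hy)
    exact Set.mem_biUnion hx ⟨hyB, hyU⟩

lemma breakPoints_comp_subset {f g : ℝ → ℝ} (hc : Continuous f) :
    breakPoints (g ∘ f) ⊆ breakPoints f ∪ f ⁻¹' breakPoints g := by
  intro x hx
  by_contra hnot
  simp only [Set.mem_union, Set.mem_preimage, breakPoints, Set.mem_ofPred_eq, not_or,
    not_not] at hnot
  exact hx (hnot.2.comp hnot.1 hc.continuousAt)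

namespace IsPLFun

variable {f g : ℝ → ℝ}

lemma affine_comp (hf : IsPLFun f) (a b : ℝ) : IsPLFun fun x => a * f x + b := by
  obtain ⟨B, hB, haff⟩ := hf
  refine ⟨B, hB, fun x hx => ?_⟩
  obtain ⟨c, d, hcd⟩ := haff x hx
  exact ⟨a * c, a * d + b, by filter_upwards [hcd] with y hy; rw [hy]; ring⟩

lemma comp (hg : IsPLFun g) (hf : IsPLFun f) (hc : Continuous f) (hi : Function.Injective f) :
    IsPLFun (g ∘ f) := by
  rw [isPLFun_iff_breakPoints] at *
  intro x
  obtain ⟨U, hU, hUfin⟩ := hf x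
  obtain ⟨V, hV, hVfin⟩ := hg (f x)
  refine ⟨U ∩ f ⁻¹' V, Filter.inter_mem hU (hc.continuousAt.preimage_mem_nhds hV),
    (hUfin.union (hVfin.preimage hi.injOn)).subset ?_⟩
  rintro y ⟨hy, hyU, hyV⟩
  rcases breakPoints_comp_subset hc hy with hy | hy
  exacts [Or.inl ⟨hy, hyU⟩, Or.inr ⟨hy, hyV⟩]

lemma orderIso_symm (e : ℝ ≃o ℝ) (he : IsPLFun e) : IsPLFun e.symm := by
  rw [isPLFun_iff_breakPoints] at *
  intro y
  obtain ⟨V, hV, hVfin⟩ := he (e.symm y)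
  refine ⟨e.symm ⁻¹' V, e.symm.continuous.continuousAt.preimage_mem_nhds hV,
    (hVfin.preimage e.symm.injective.injOn).subset ?_⟩
  rintro z ⟨hz, hzV⟩
  exact ⟨fun haff => hz (haff.orderIso_symm e), hzV⟩

lemma eventuallyEq_floor_glue (g : ℤ → ℝ → ℝ) (x₀ : ℝ) {j : ℤ} {y : ℝ}
    (hy : y ∈ Ioo (x₀ + j) (x₀ + j + 1)) : (fun x => g ⌊x - x₀⌋ x) =ᶠ[𝓝 y] g j := by
  filter_upwards [Ioo_mem_nhds hy.1 hy.2] with z hz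
  rw [Int.floor_eq_iff.mpr ⟨by linarith [hz.1], by linarith [hz.2]⟩]

lemma floor_glue {g : ℤ → ℝ → ℝ} (hg : ∀ k, IsPLFun (g k)) (x₀ : ℝ) :
    IsPLFun fun x => g ⌊x - x₀⌋ x := by
  simp only [isPLFun_iff_breakPoints] at *
  intro x
  set k := ⌊x - x₀⌋
  obtain ⟨U₁, hU₁, hfin₁⟩ := hg (k - 1) x
  obtain ⟨U₂, hU₂, hfin₂⟩ := hg k x
  have hIoo : Ioo (x₀ + k - 1) (x₀ + k + 1) ∈ 𝓝 x :=
    Ioo_mem_nhds (by linarith [Int.floor_le (x - x₀)])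
      (by linarith [Int.lt_floor_add_one (x - x₀)])
  refine ⟨Ioo (x₀ + k - 1) (x₀ + k + 1) ∩ U₁ ∩ U₂,
    Filter.inter_mem (Filter.inter_mem hIoo hU₁) hU₂,
    (((Set.finite_singleton (x₀ + k)).union hfin₁).union hfin₂).subset ?_⟩
  rintro y ⟨hy, ⟨⟨hy₁, hy₂⟩, hyU₁⟩, hyU₂⟩
  rcases lt_trichotomy y (x₀ + k) with hlt | heq | hgt
  · refine Or.inl (Or.inr ⟨fun haff => hy (haff.congr ?_), hyU₁⟩)
    exact (eventuallyEq_floor_glue g x₀ (j := k - 1)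
      ⟨by push_cast; linarith, by push_cast; linarith⟩).symm
  · exact Or.inl (Or.inl heq)
  · exact Or.inr
      ⟨fun haff => hy (haff.congr (eventuallyEq_floor_glue g x₀ ⟨hgt, hy₂⟩).symm), hyU₂⟩

lemma zpow {Φ : ℝ ≃o ℝ} (hΦ : IsPLFun Φ) (j : ℤ) : IsPLFun ⇑(Φ ^ j) := by
  induction j using Int.induction_on with
  | zero =>
    rw [zpow_zero, RelIso.coe_one]
    exact ⟨∅, by simp, fun x _ => ⟨1, 0, .of_forall fun y => by simp⟩⟩
  | succ j ih =>
    rw [zpow_add_one, RelIso.coe_mul]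
    exact ih.comp hΦ Φ.continuous Φ.injective
  | pred j ih =>
    rw [zpow_sub_one, RelIso.coe_mul]
    exact ih.comp (hΦ.orderIso_symm Φ) Φ.symm.continuous Φ.symm.injective

end IsPLFun

namespace OrderIso

variable (Φ : ℝ ≃o ℝ) (x₀ : ℝ)

lemma zpow_apply_add_intCast (hΦ : ∀ k : ℤ, Φ (x₀ + k) = x₀ + k + 1) (j k : ℤ) :
    (Φ ^ j) (x₀ + k) = x₀ + k + j := by
  induction j using Int.induction_on generalizing k with
  | zero => simp
  | succ j ih =>
    rw [zpow_add_one, RelIso.mul_apply, hΦ,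
      show x₀ + k + 1 = x₀ + ↑(k + 1) by push_cast; ring, ih]
    push_cast; ring
  | pred j ih =>
    have hinv : Φ⁻¹ (x₀ + k) = x₀ + ↑(k - 1) := by
      rw [← RelIso.inv_apply_self Φ (x₀ + ↑(k - 1)), hΦ]; push_cast; ring_nf
    rw [zpow_sub_one, RelIso.mul_apply, hinv, ih]
    push_cast; ring

variable {Φ x₀}

lemma floor_zpow_apply_sub (hΦ : ∀ k : ℤ, Φ (x₀ + k) = x₀ + k + 1) (j : ℤ) (x : ℝ) :
    ⌊(Φ ^ j) x - x₀⌋ = ⌊x - x₀⌋ + j := by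
  set k := ⌊x - x₀⌋
  have hlo : x₀ + k ≤ x := by linarith [Int.floor_le (x - x₀)]
  have hhi : x < x₀ + ↑(k + 1) := by push_cast; linarith [Int.lt_floor_add_one (x - x₀)]
  have h₁ := (Φ ^ j).monotone hlo
  have h₂ := (Φ ^ j).strictMono hhi
  rw [zpow_apply_add_intCast Φ x₀ hΦ] at h₁ h₂
  rw [Int.floor_eq_iff]
  push_cast at h₂ ⊢
  constructor <;> linarith

variable (Φ x₀)

-- The identity on the fundamental domain `[x₀, x₀ + 1)`, extended so as to conjugate `Φ`
-- to `· + 1`.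
noncomputable def straighten (x : ℝ) : ℝ := (Φ ^ (-⌊x - x₀⌋)) x + ⌊x - x₀⌋

noncomputable def unstraighten (y : ℝ) : ℝ := (Φ ^ ⌊y - x₀⌋) (y - ⌊y - x₀⌋)

variable {Φ x₀}

lemma isPLFun_straighten (hpl : IsPLFun Φ) : IsPLFun (straighten Φ x₀) :=
  IsPLFun.floor_glue (g := fun k x => (Φ ^ (-k)) x + k)
    (fun k => by simpa using (hpl.zpow (-k)).affine_comp 1 k) x₀

lemma floor_straighten_sub (hΦ : ∀ k : ℤ, Φ (x₀ + k) = x₀ + k + 1) (x : ℝ) :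
    ⌊straighten Φ x₀ x - x₀⌋ = ⌊x - x₀⌋ := by
  rw [straighten, add_sub_right_comm, Int.floor_add_intCast, floor_zpow_apply_sub hΦ]
  ring

lemma straighten_unstraighten (hΦ : ∀ k : ℤ, Φ (x₀ + k) = x₀ + k + 1) (y : ℝ) :
    straighten Φ x₀ (unstraighten Φ x₀ y) = y := by
  have hfloor : ⌊unstraighten Φ x₀ y - x₀⌋ = ⌊y - x₀⌋ := by
    rw [unstraighten, floor_zpow_apply_sub hΦ, sub_right_comm, Int.floor_sub_intCast]
    ring
  rw [straighten, hfloor, unstraighten, ← RelIso.mul_apply, ← zpow_add, neg_add_cancel,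
    zpow_zero, RelIso.one_apply, sub_add_cancel]

lemma straighten_strictMono (hΦ : ∀ k : ℤ, Φ (x₀ + k) = x₀ + k + 1) :
    StrictMono (straighten Φ x₀) := by
  intro x y hxy
  rcases (Int.floor_le_floor (a := x - x₀) (b := y - x₀) (by linarith)).eq_or_lt with heq | hlt
  · rw [straighten, straighten, heq]
    linarith [(Φ ^ (-⌊y - x₀⌋)).strictMono hxy]
  · have hx := Int.lt_floor_add_one (straighten Φ x₀ x - x₀)
    have hy := Int.floor_le (straighten Φ x₀ y - x₀)
    rw [floor_straighten_sub hΦ] at hx hy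
    have : (⌊x - x₀⌋ : ℝ) + 1 ≤ ⌊y - x₀⌋ := by exact_mod_cast hlt
    linarith

lemma straighten_apply (hΦ : ∀ k : ℤ, Φ (x₀ + k) = x₀ + k + 1) (x : ℝ) :
    straighten Φ x₀ (Φ x) = straighten Φ x₀ x + 1 := by
  have hfloor : ⌊Φ x - x₀⌋ = ⌊x - x₀⌋ + 1 := by
    simpa using floor_zpow_apply_sub hΦ 1 x
  rw [straighten, straighten, hfloor, ← RelIso.mul_apply, ← zpow_add_one]
  push_cast
  ring_nf

lemma exists_isPLFun_conj_add_one {Φ : ℝ ≃o ℝ} (hpl : IsPLFun Φ) {x₀ : ℝ}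
    (hΦ : ∀ k : ℤ, Φ (x₀ + k) = x₀ + k + 1) :
    ∃ h : ℝ ≃o ℝ, IsPLFun h ∧ ∀ x, h (Φ x) = h x + 1 :=
  ⟨(straighten_strictMono hΦ).orderIsoOfSurjective _
      fun y => ⟨_, straighten_unstraighten hΦ y⟩,
    isPLFun_straighten hpl, straighten_apply hΦ⟩

end OrderIso

lemma exists_isPLFun_reversing_involution_of_conj_add_one {F : ℝ → ℝ} (h : ℝ ≃o ℝ)
    (hpl : IsPLFun h) (hconj : ∀ x, h (F x) = h x + 1) :
    ∃ τ : ℝ → ℝ, StrictAnti τ ∧ Function.Bijective τ ∧ IsPLFun τ ∧ (∀ x, τ (τ x) = x) ∧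
      (∀ x, F (τ (F (τ x))) = x) ∧ (∀ x, τ (F (τ (F x))) = x) := by
  set τ : ℝ → ℝ := fun x => h.symm (-h x)
  have hinv : Function.Involutive τ := fun x => by simp [τ]
  have hneg : IsPLFun fun x => -h x := by simpa using hpl.affine_comp (-1) 0
  refine ⟨τ, h.symm.strictMono.comp_strictAnti h.strictMono.neg, hinv.bijective,
    (hpl.orderIso_symm h).comp hneg (by fun_prop) (neg_injective.comp h.injective), hinv,
    fun x => h.injective ?_, fun x => h.injective ?_⟩
  · simp only [τ, hconj, OrderIso.apply_symm_apply]; ring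
  · simp only [τ, hconj, OrderIso.apply_symm_apply]; ring

lemma circle_exp_two_pi_mul_eq_iff {a b : ℝ} :
    Circle.exp (2 * π * a) = Circle.exp (2 * π * b) ↔ ∃ m : ℤ, a = b + m := by
  rw [Circle.exp_eq_exp]
  refine exists_congr fun m => ⟨fun h => ?_, fun h => by rw [h]; ring⟩
  have hπ : 2 * π ≠ 0 := by positivity
  exact mul_left_cancel₀ hπ (by rw [h]; ring)

namespace IsLift

variable {f : Circle → Circle} {F : ℝ → ℝ}

lemma add_intCast {k : ℝ} (hF : IsLift f F k) (m : ℤ) : IsLift f (fun x => F x + m) k :=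
  ⟨fun x => by rw [hF.1]; exact circle_exp_two_pi_mul_eq_iff.mpr ⟨-m, by push_cast; ring⟩,
    fun x => by simp only [hF.2]; ring⟩

lemma map_add_intCast (hF : IsLift f F 1) (x : ℝ) (m : ℤ) : F (x + m) = F x + m :=
  AddConstMapClass.map_add_int (⟨F, hF.2⟩ : AddConstMap ℝ ℝ 1 1) x m

lemma surjective (hF : IsLift f F 1) (hf : Function.Surjective f) : Function.Surjective F := by
  intro y
  obtain ⟨z, hz⟩ := hf (Circle.exp (2 * π * y))
  obtain ⟨x, rfl⟩ := Circle.exp_surjective z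
  obtain ⟨m, hm⟩ : ∃ m : ℤ, F (x / (2 * π)) = y + m := by
    rw [← circle_exp_two_pi_mul_eq_iff, ← hF.1, mul_div_cancel₀ _ (by positivity), hz]
  exact ⟨x / (2 * π) - m, by rw [sub_eq_add_neg, ← Int.cast_neg, hF.map_add_intCast, hm]; simp⟩

lemma exists_apply_eq_add_intCast {k : ℝ} (hF : IsLift f F k) {z : Circle} (hz : f z = z) :
    ∃ (x₀ : ℝ) (m : ℤ), F x₀ = x₀ + m := by
  obtain ⟨x, rfl⟩ := Circle.exp_surjective z
  refine ⟨x / (2 * π), circle_exp_two_pi_mul_eq_iff.mp ?_⟩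
  rw [← hF.1, mul_div_cancel₀ _ (by positivity), hz]

end IsLift

/-- Let `f ∈ PL⁺(S¹)` with rotation number `0` (equivalently, `f` has a fixed
point).  Then `f` admits a lift `F ∈ PL⁺(ℝ)` which is strongly reversible in
`PL(ℝ)` by an orientation-reversing piecewise linear involution `τ`:
`τ F τ = F⁻¹`, expressed inverse-free as `F ∘ τ ∘ F ∘ τ = id = τ ∘ F ∘ τ ∘ F`. -/
theorem lift_strongly_reversible_of_rho_zero (f : Circle ≃ₜ Circle)
    (hf : PLplus f) (hfix : ∃ z : Circle, f z = z) :
    ∃ F τ : ℝ → ℝ, IsLift f F 1 ∧ StrictMono F ∧ IsPLFun F ∧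
      StrictAnti τ ∧ Function.Bijective τ ∧ IsPLFun τ ∧ (∀ x : ℝ, τ (τ x) = x) ∧
      (∀ x : ℝ, F (τ (F (τ x))) = x) ∧ (∀ x : ℝ, τ (F (τ (F x))) = x) := by
  obtain ⟨F₀, hmono₀, hpl₀, hlift₀⟩ := hf
  obtain ⟨z, hz⟩ := hfix
  obtain ⟨x₀, m, hx₀⟩ := hlift₀.exists_apply_eq_add_intCast hz
  set F : ℝ → ℝ := fun x => F₀ x + ↑(1 - m)
  have hlift : IsLift f F 1 := hlift₀.add_intCast (1 - m)
  have hmono : StrictMono F := fun a b hab => by simpa [F] using hmono₀ hab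
  have hpl : IsPLFun F := by simpa only [one_mul] using hpl₀.affine_comp 1 ↑(1 - m)
  set Φ : ℝ ≃o ℝ := hmono.orderIsoOfSurjective F (hlift.surjective f.surjective)
  have hshift : ∀ k : ℤ, Φ (x₀ + k) = x₀ + k + 1 := fun k => by
    simp only [Φ, StrictMono.coe_orderIsoOfSurjective, hlift.map_add_intCast, F, hx₀]
    push_cast; ring
  obtain ⟨h, hhpl, hconj⟩ := OrderIso.exists_isPLFun_conj_add_one (Φ := Φ) hpl hshift
  obtain ⟨τ, hτ⟩ := exists_isPLFun_reversing_involution_of_conj_add_one h hhpl hconj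
  exact ⟨F, τ, hlift, hmono, hpl, hτ⟩
end

section
/- Every fixed-point-free orientation-preserving piecewise linear homeomorphism of an open interval I is strongly reversible in PL(I) by an orientation-reversing involution. -/
open Set

/-- `f` is piecewise linear on the open interval `I`: its break points are locally
finite in `I`, and off them `f` is locally affine. -/
def IsPLOn (f : ℝ → ℝ) (I : Set ℝ) : Prop :=
  ∃ B : Set ℝ, (∀ x ∈ I, ∃ ε > 0, (B ∩ Set.Ioo (x - ε) (x + ε)).Finite) ∧
    ∀ x ∈ I \ B, ∃ a b : ℝ, ∀ᶠ y in nhds x, y ∈ I → f y = a * y + b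

/-- `f` represents an element of `PL⁺(I)`: an increasing piecewise linear
homeomorphism of the open interval `I` onto itself. -/
def PLIntPlus (f : ℝ → ℝ) (I : Set ℝ) : Prop :=
  Set.BijOn f I I ∧ StrictMonoOn f I ∧ IsPLOn f I

/-- `f` represents an element of `PL⁻(I)`: a decreasing piecewise linear
homeomorphism of the open interval `I` onto itself. -/
def PLIntMinus (f : ℝ → ℝ) (I : Set ℝ) : Prop :=
  Set.BijOn f I I ∧ StrictAntiOn f I ∧ IsPLOn f I

/-- `f` represents an element of `PL(I)`. -/
def PLInt (f : ℝ → ℝ) (I : Set ℝ) : Prop := PLIntPlus f I ∨ PLIntMinus f I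

/-!
Extend `f` by the identity to an order automorphism `F` of `ℝ`; replacing `F` by `F⁻¹` if
necessary (`α F⁻¹ α = F` is equivalent to `α F α = F⁻¹`), `F` moves every point of
`I = (a, b)` to the right. Fix `c ∈ I`. The translates `F^k [c, F c)` tile `I`, so every
`x ∈ I` is `F^k d` with `d ∈ [c, F c)` for a unique `k`, and one sets
`α (F^k d) = F^(-k) (c + F c - d)`. This reflects the fundamental domain about its midpoint
and intertwines `F^k` with `F^(-k)`, whence `α² = id` and `F α F = α`; it is decreasing
because it reverses the order of the tiles. Near any point, on each side, `α` agrees with one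
of the maps `F^n ∘ (c + F c - ·) ∘ F^n`, so its break points remain locally finite.
-/

open Filter Topology Function

namespace OrderIso

variable {α : Type*} [Preorder α]

theorem mapsTo_Ioo_of_apply_eq_self {G : α ≃o α} {a b : α} (ha : G a = a) (hb : G b = b) :
    MapsTo G (Ioo a b) (Ioo a b) :=
  fun _ hx => ⟨ha ▸ G.strictMono hx.1, hb ▸ G.strictMono hx.2⟩

theorem zpow_apply_eq_self {G : α ≃o α} {a : α} (ha : G a = a) (n : ℤ) : (G ^ n) a = a := by
  have hG : G ∈ MulAction.stabilizer (α ≃o α) a := by simpa using ha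
  simpa using zpow_mem hG n

theorem mapsTo_zpow_Ioo_of_apply_eq_self {G : α ≃o α} {a b : α} (ha : G a = a) (hb : G b = b)
    (n : ℤ) : MapsTo ⇑(G ^ n) (Ioo a b) (Ioo a b) :=
  mapsTo_Ioo_of_apply_eq_self (zpow_apply_eq_self ha n) (zpow_apply_eq_self hb n)

theorem zpow_add_one_apply (G : α ≃o α) (n : ℤ) (x : α) : (G ^ (n + 1)) x = G ((G ^ n) x) := by
  rw [add_comm, zpow_add, zpow_one, RelIso.mul_apply]

theorem zpow_neg_apply_zpow_apply (G : α ≃o α) (n : ℤ) (x : α) : (G ^ (-n)) ((G ^ n) x) = x := by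
  rw [zpow_neg, RelIso.inv_apply_self]

end OrderIso

theorem add_sub_mem_Icc {α : Type*} [AddCommGroup α] [PartialOrder α] [IsOrderedAddMonoid α]
    {c d x : α} (hx : x ∈ Icc c d) : c + d - x ∈ Icc c d :=
  ⟨by simpa using sub_le_sub_left hx.2 (c + d), by simpa using sub_le_sub_left hx.1 (c + d)⟩

theorem forall_lt_or_forall_gt_of_forall_ne {α : Type*} [LinearOrder α] [TopologicalSpace α]
    [OrderClosedTopology α] {g : α → α} {s : Set α} (hs : IsPreconnected s)
    (hg : ContinuousOn g s) (hne : ∀ x ∈ s, g x ≠ x) :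
    (∀ x ∈ s, x < g x) ∨ ∀ x ∈ s, g x < x := by
  by_contra! h
  obtain ⟨⟨x, hx, hgx⟩, y, hy, hgy⟩ := h
  obtain ⟨z, hz, hgz⟩ := hs.intermediate_value₂ hx hy hg continuousOn_id hgx hgy
  exact hne z hz hgz

theorem exists_orderIso_eqOn {α : Type*} [LinearOrder α] {f : α → α} {a b : α}
    (hbij : BijOn f (Ioo a b) (Ioo a b)) (hmono : StrictMonoOn f (Ioo a b)) :
    ∃ F : α ≃o α, EqOn F f (Ioo a b) ∧ F a = a ∧ F b = b := by
  classical
  set g := (Ioo a b).piecewise f id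
  have hg : StrictMono g := by
    intro x y hxy
    by_cases hx : x ∈ Ioo a b <;> by_cases hy : y ∈ Ioo a b <;>
      simp only [g, piecewise_eq_of_mem, piecewise_eq_of_notMem, hx, hy, not_false_eq_true, id]
    · exact hmono hx hy hxy
    · exact (hbij.mapsTo hx).2.trans_le (not_lt.1 fun hyb => hy ⟨hx.1.trans hxy, hyb⟩)
    · exact (not_lt.1 fun hax => hx ⟨hax, hxy.trans hy.2⟩).trans_lt (hbij.mapsTo hy).1
    · exact hxy
  have hsurj : Surjective g := by
    intro y
    by_cases hy : y ∈ Ioo a b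
    · obtain ⟨x, hx, rfl⟩ := hbij.surjOn hy
      exact ⟨x, piecewise_eq_of_mem _ _ _ hx⟩
    · exact ⟨y, piecewise_eq_of_notMem _ _ _ hy⟩
  refine ⟨hg.orderIsoOfSurjective g hsurj, fun x hx => piecewise_eq_of_mem _ _ _ hx, ?_, ?_⟩
  · exact piecewise_eq_of_notMem _ _ _ fun h : a ∈ Ioo a b => h.1.false
  · exact piecewise_eq_of_notMem _ _ _ fun h : b ∈ Ioo a b => h.2.false

def LocallyAffineAt (g : ℝ → ℝ) (x : ℝ) : Prop :=
  ∃ p q : ℝ, g =ᶠ[𝓝 x] fun y => p * y + q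

def PiecewiseAffineAt (g : ℝ → ℝ) (x : ℝ) : Prop :=
  ∀ᶠ y in 𝓝[≠] x, LocallyAffineAt g y

namespace LocallyAffineAt

variable {g h : ℝ → ℝ} {x : ℝ}

theorem congr (hg : LocallyAffineAt g x) (hgh : g =ᶠ[𝓝 x] h) : LocallyAffineAt h x :=
  let ⟨p, q, hpq⟩ := hg
  ⟨p, q, hgh.symm.trans hpq⟩

theorem continuousAt (hg : LocallyAffineAt g x) : ContinuousAt g x :=
  let ⟨_, _, hpq⟩ := hg
  (continuous_const.mul continuous_id |>.add continuous_const).continuousAt.congr hpq.symm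

theorem comp (hh : LocallyAffineAt h (g x)) (hg : LocallyAffineAt g x) :
    LocallyAffineAt (h ∘ g) x := by
  obtain ⟨r, s, hrs⟩ := hh
  have hhg : ∀ᶠ y in 𝓝 x, h (g y) = r * g y + s := hg.continuousAt.eventually hrs
  obtain ⟨p, q, hpq⟩ := hg
  refine ⟨r * p, r * q + s, ?_⟩
  filter_upwards [hpq, hhg] with y hy hhy
  rw [comp_apply, hhy, hy]
  ring

theorem orderIso_symm {e : ℝ ≃o ℝ} (he : LocallyAffineAt e x) :
    LocallyAffineAt e.symm (e x) := by
  obtain ⟨p, q, hpq⟩ := he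
  have hp : p ≠ 0 := by
    rintro rfl
    obtain ⟨y, hy, hyx⟩ := ((hpq.filter_mono nhdsWithin_le_nhds).and
      (self_mem_nhdsWithin : ∀ᶠ y in 𝓝[≠] x, y ≠ x)).exists
    exact hyx (e.injective (by rw [hy, hpq.self_of_nhds]; ring))
  refine ⟨p⁻¹, -q / p, ?_⟩
  have hsymm : Tendsto e.symm (𝓝 (e x)) (𝓝 x) := by
    simpa using e.symm.continuous.tendsto (e x)
  filter_upwards [hsymm.eventually hpq] with z hz
  rw [e.apply_symm_apply] at hz
  field_simp
  linarith

end LocallyAffineAt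

theorem tendsto_nhdsNE_of_injective {g : ℝ → ℝ} {x : ℝ} (hgi : Injective g)
    (hgc : ContinuousAt g x) : Tendsto g (𝓝[≠] x) (𝓝[≠] (g x)) :=
  tendsto_nhdsWithin_of_tendsto_nhds_of_eventually_within _ (hgc.mono_left nhdsWithin_le_nhds)
    (eventually_nhdsWithin_of_forall fun _ hy => hgi.ne hy)

namespace PiecewiseAffineAt

variable {g h : ℝ → ℝ} {x : ℝ}

theorem comp (hh : PiecewiseAffineAt h (g x)) (hg : PiecewiseAffineAt g x)
    (hgi : Injective g) (hgc : ContinuousAt g x) : PiecewiseAffineAt (h ∘ g) x := by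
  filter_upwards [hg, (tendsto_nhdsNE_of_injective hgi hgc).eventually hh] with y hgy hhy
  exact hhy.comp hgy

theorem orderIso_symm {e : ℝ ≃o ℝ} (he : PiecewiseAffineAt e x) :
    PiecewiseAffineAt e.symm (e x) := by
  have hsymm := tendsto_nhdsNE_of_injective e.symm.injective e.symm.continuous.continuousAt
    (x := e x)
  rw [e.symm_apply_apply] at hsymm
  filter_upwards [hsymm.eventually he] with z hz
  simpa using hz.orderIso_symm

end PiecewiseAffineAt

theorem isPLOn_iff_forall_piecewiseAffineAt {g : ℝ → ℝ} {I : Set ℝ} (hI : IsOpen I) :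
    IsPLOn g I ↔ ∀ x ∈ I, PiecewiseAffineAt g x := by
  constructor
  · rintro ⟨B, hBfin, hBaff⟩ x hx
    obtain ⟨ε, hε, hfin⟩ := hBfin x hx
    have hS : ∀ᶠ y in 𝓝 x, y ∉ (B ∩ Ioo (x - ε) (x + ε)) \ {x} :=
      (hfin.sdiff (t := {x})).isClosed.isOpen_compl.mem_nhds fun h => h.2 rfl
    filter_upwards [nhdsWithin_le_nhds hS, self_mem_nhdsWithin,
      nhdsWithin_le_nhds (Ioo_mem_nhds (by linarith : x - ε < x) (by linarith : x < x + ε)),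
      nhdsWithin_le_nhds (hI.mem_nhds hx)] with y hyS hyx hyball hyI
    obtain ⟨p, q, hpq⟩ := hBaff y ⟨hyI, fun hyB => hyS ⟨⟨hyB, hyball⟩, hyx⟩⟩
    exact ⟨p, q, (hpq.and (hI.mem_nhds hyI)).mono fun z hz => hz.1 hz.2⟩
  · intro h
    refine ⟨{y | ¬ LocallyAffineAt g y}, fun x hx => ?_, fun x hx => ?_⟩
    · obtain ⟨ε, hε, hball⟩ :=
        Metric.eventually_nhds_iff_ball.1 (eventually_nhdsWithin_iff.1 (h x hx))
      refine ⟨ε, hε, (finite_singleton x).subset fun y hy => ?_⟩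
      by_contra hyx
      exact hy.1 (hball y (by rw [Real.ball_eq_Ioo]; exact hy.2) hyx)
    · obtain ⟨p, q, hpq⟩ := not_not.1 hx.2
      exact ⟨p, q, hpq.mono fun y hy _ => hy⟩

theorem IsPLOn.congr {f g : ℝ → ℝ} {I : Set ℝ} (hf : IsPLOn f I) (hfg : EqOn f g I) :
    IsPLOn g I :=
  let ⟨B, hBfin, hBaff⟩ := hf
  ⟨B, hBfin, fun x hx => let ⟨p, q, hpq⟩ := hBaff x hx
    ⟨p, q, hpq.mono fun _ hy hyI => hfg hyI ▸ hy hyI⟩⟩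

-- A copy of `PL⁺(a, b)` in `ℝ ≃o ℝ` (extend by the identity off `(a, b)`), so that the
-- integer powers `F ^ n` are available.
def plGroup (a b : ℝ) : Subgroup (ℝ ≃o ℝ) where
  carrier := {G | G a = a ∧ G b = b ∧ IsPLOn G (Ioo a b)}
  one_mem' := ⟨rfl, rfl, (isPLOn_iff_forall_piecewiseAffineAt isOpen_Ioo).2 fun _ _ =>
    .of_forall fun _ => ⟨1, 0, .of_forall fun _ => by simp [RelIso.one_apply]⟩⟩
  mul_mem' := by
    rintro G H ⟨hGa, hGb, hG⟩ ⟨hHa, hHb, hH⟩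
    rw [isPLOn_iff_forall_piecewiseAffineAt isOpen_Ioo] at hG hH
    refine ⟨by simp [RelIso.mul_apply, hHa, hGa], by simp [RelIso.mul_apply, hHb, hGb],
      (isPLOn_iff_forall_piecewiseAffineAt isOpen_Ioo).2 fun x hx => ?_⟩
    rw [RelIso.coe_mul]
    exact (hG _ (OrderIso.mapsTo_Ioo_of_apply_eq_self hHa hHb hx)).comp (hH x hx) H.injective
      H.continuous.continuousAt
  inv_mem' := by
    rintro G ⟨hGa, hGb, hG⟩
    rw [isPLOn_iff_forall_piecewiseAffineAt isOpen_Ioo] at hG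
    refine ⟨G.symm_apply_eq.2 hGa.symm, G.symm_apply_eq.2 hGb.symm,
      (isPLOn_iff_forall_piecewiseAffineAt isOpen_Ioo).2 fun y hy => ?_⟩
    have hy' : G.symm y ∈ Ioo a b :=
      OrderIso.mapsTo_Ioo_of_apply_eq_self (G.symm_apply_eq.2 hGa.symm)
        (G.symm_apply_eq.2 hGb.symm) hy
    show PiecewiseAffineAt G.symm y
    simpa using (hG _ hy').orderIso_symm

theorem exists_mem_plGroup_eqOn {f : ℝ → ℝ} {a b : ℝ} (hf : PLIntPlus f (Ioo a b)) :
    ∃ F ∈ plGroup a b, EqOn F f (Ioo a b) := by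
  obtain ⟨hbij, hmono, hpl⟩ := hf
  obtain ⟨F, hFf, hFa, hFb⟩ := exists_orderIso_eqOn hbij hmono
  exact ⟨F, ⟨hFa, hFb, hpl.congr hFf.symm⟩, hFf⟩

-- For `x < F x` on `I` and `c ∈ I`, `[c, F c)` is a fundamental domain of `F`:
-- `orbitIndex F c x` is the `n` with `F^n x ∈ [c, F c)` (arbitrary if there is none), and
-- `orbitReflection F c` reflects `[c, F c]` about its midpoint and is extended by
-- `α ∘ F^k = F^(-k) ∘ α`.
noncomputable def orbitIndex (F : ℝ ≃o ℝ) (c x : ℝ) : ℤ :=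
  Classical.epsilon fun n : ℤ => (F ^ n) x ∈ Ico c (F c)

noncomputable def orbitReflection (F : ℝ ≃o ℝ) (c x : ℝ) : ℝ :=
  (F ^ orbitIndex F c x) (c + F c - (F ^ orbitIndex F c x) x)

section Orbits

variable {F : ℝ ≃o ℝ} {a b c : ℝ}

theorem strictMono_zpow_apply (hlt : ∀ x ∈ Ioo a b, x < F x) {x : ℝ} (hx : x ∈ Ioo a b) :
    StrictMono fun n : ℤ => (F ^ n) x :=
  strictMono_int_of_lt_succ fun n => by
    rw [zpow_add_one, RelIso.mul_apply]
    exact (F ^ n).strictMono (hlt x hx)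

theorem exists_lt_zpow_apply (hlt : ∀ x ∈ Ioo a b, x < F x) {y z : ℝ} (hy : y ∈ Ioo a b)
    (hz : z ∈ Ioo a b) : ∃ n : ℤ, y < (F ^ n) z := by
  -- Otherwise the forward orbit of `z` increases to a fixed point of `F` in `I`.
  by_contra! h
  set u : ℕ → ℝ := fun k => (F ^ (k : ℤ)) z
  have hu : Monotone u := (strictMono_zpow_apply hlt hz).monotone.comp Nat.mono_cast
  have hbdd : BddAbove (range u) := ⟨y, forall_mem_range.2 fun k => h k⟩
  have huL : Tendsto u atTop (𝓝 (⨆ k, u k)) := tendsto_atTop_ciSup hu hbdd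
  have hu0 : u 0 = z := by simp [u]
  have hL : ⨆ k, u k ∈ Ioo a b :=
    ⟨hz.1.trans_le (hu0 ▸ le_ciSup hbdd 0), (ciSup_le fun k : ℕ => h k).trans_lt hy.2⟩
  have hFuL : Tendsto (fun k => F (u k)) atTop (𝓝 (⨆ k, u k)) :=
    (huL.comp (tendsto_add_atTop_nat 1)).congr fun k => by
      simp [u, pow_succ', RelIso.mul_apply]
  exact (hlt _ hL).ne' (tendsto_nhds_unique ((F.continuous.tendsto _).comp huL) hFuL)

theorem zpow_apply_le_zpow_apply (hlt : ∀ x ∈ Ioo a b, x < F x) (hc : c ∈ Ioo a b)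
    {d e : ℝ} {k l : ℤ} (hd : d ≤ F c) (he : c ≤ e) (hkl : k < l) : (F ^ k) d ≤ (F ^ l) e :=
  calc (F ^ k) d ≤ (F ^ k) (F c) := (F ^ k).monotone hd
    _ = (F ^ (k + 1)) c := by rw [zpow_add_one, RelIso.mul_apply]
    _ ≤ (F ^ l) c := (strictMono_zpow_apply hlt hc).monotone hkl
    _ ≤ (F ^ l) e := (F ^ l).monotone he

theorem exists_zpow_apply_mem_Ico (hlt : ∀ x ∈ Ioo a b, x < F x) (hc : c ∈ Ioo a b) {x : ℝ}
    (hx : x ∈ Ioo a b) : ∃ n : ℤ, (F ^ n) x ∈ Ico c (F c) := by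
  obtain ⟨m, hm⟩ := exists_lt_zpow_apply hlt hx hc
  obtain ⟨n₀, hn₀⟩ := exists_lt_zpow_apply hlt hc hx
  have hbdd : ∀ n : ℤ, c ≤ (F ^ n) x → -m ≤ n := by
    intro n hn
    by_contra! hnm
    have hxc : (F ^ (-m)) x < c := by
      simpa [OrderIso.zpow_neg_apply_zpow_apply] using (F ^ (-m)).strictMono hm
    exact (hn.trans_lt ((strictMono_zpow_apply hlt hx) hnm)).not_gt hxc
  obtain ⟨n, hn, hleast⟩ := Int.exists_least_of_bdd ⟨-m, hbdd⟩ ⟨n₀, hn₀.le⟩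
  have hpred : (F ^ (n - 1)) x < c := not_le.1 fun h => by linarith [hleast _ h]
  refine ⟨n, hn, ?_⟩
  calc (F ^ n) x = F ((F ^ (n - 1)) x) := by rw [← F.zpow_add_one_apply, sub_add_cancel]
    _ < F c := F.strictMono hpred

theorem eq_of_zpow_apply_mem_Ico (hlt : ∀ x ∈ Ioo a b, x < F x) {x : ℝ} (hx : x ∈ Ioo a b)
    {k l : ℤ} (hk : (F ^ k) x ∈ Ico c (F c)) (hl : (F ^ l) x ∈ Ico c (F c)) : k = l := by
  wlog hkl : k < l generalizing k l
  · exact (not_lt.1 hkl).lt_or_eq.elim (fun h => (this hl hk h).symm) Eq.symm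
  refine absurd hl.2 (not_lt.2 ?_)
  calc F c ≤ F ((F ^ k) x) := F.monotone hk.1
    _ = (F ^ (k + 1)) x := (OrderIso.zpow_add_one_apply F k x).symm
    _ ≤ (F ^ l) x := (strictMono_zpow_apply hlt hx).monotone hkl

theorem orbitReflection_eq (hlt : ∀ x ∈ Ioo a b, x < F x) {x : ℝ} (hx : x ∈ Ioo a b) {n : ℤ}
    (hn : (F ^ n) x ∈ Ico c (F c)) : orbitReflection F c x = (F ^ n) (c + F c - (F ^ n) x) := by
  have hspec : (F ^ orbitIndex F c x) x ∈ Ico c (F c) :=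
    Classical.epsilon_spec (p := fun n : ℤ => (F ^ n) x ∈ Ico c (F c)) ⟨n, hn⟩
  rw [orbitReflection, eq_of_zpow_apply_mem_Ico hlt hx hspec hn]

theorem exists_eq_zpow_apply (hlt : ∀ x ∈ Ioo a b, x < F x) (hc : c ∈ Ioo a b) {x : ℝ}
    (hx : x ∈ Ioo a b) : ∃ k : ℤ, ∃ d ∈ Ico c (F c), (F ^ k) d = x :=
  let ⟨n, hn⟩ := exists_zpow_apply_mem_Ico hlt hc hx
  ⟨-n, _, hn, F.zpow_neg_apply_zpow_apply n x⟩

theorem Icc_subset_Ioo_of_apply_eq_self (ha : F a = a) (hb : F b = b) (hc : c ∈ Ioo a b) :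
    Icc c (F c) ⊆ Ioo a b :=
  Icc_subset_Ioo hc.1 (OrderIso.mapsTo_Ioo_of_apply_eq_self ha hb hc).2

variable (ha : F a = a) (hb : F b = b) (hlt : ∀ x ∈ Ioo a b, x < F x) (hc : c ∈ Ioo a b)
include ha hb hlt hc

theorem orbitReflection_zpow_apply_of_mem_Ico {d : ℝ} (hd : d ∈ Ico c (F c)) (k : ℤ) :
    orbitReflection F c ((F ^ k) d) = (F ^ (-k)) (c + F c - d) := by
  have hdI := Icc_subset_Ioo_of_apply_eq_self ha hb hc (Ico_subset_Icc_self hd)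
  have hkd : (F ^ (-k)) ((F ^ k) d) ∈ Ico c (F c) := by
    rwa [OrderIso.zpow_neg_apply_zpow_apply]
  rw [orbitReflection_eq hlt (OrderIso.mapsTo_zpow_Ioo_of_apply_eq_self ha hb k hdI) hkd,
    OrderIso.zpow_neg_apply_zpow_apply]

theorem orbitReflection_zpow_apply {d : ℝ} (hd : d ∈ Icc c (F c)) (k : ℤ) :
    orbitReflection F c ((F ^ k) d) = (F ^ (-k)) (c + F c - d) := by
  rcases hd.2.lt_or_eq with hd' | rfl
  · exact orbitReflection_zpow_apply_of_mem_Ico ha hb hlt hc ⟨hd.1, hd'⟩ k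
  -- `F^k (F c) = F^(k+1) c`, so the endpoint `d = F c` reduces to `d = c`.
  rw [← RelIso.mul_apply, ← zpow_add_one,
    orbitReflection_zpow_apply_of_mem_Ico ha hb hlt hc (left_mem_Ico.2 (hlt c hc)) (k + 1),
    add_sub_cancel_left, add_sub_cancel_right, ← RelIso.mul_apply, ← zpow_add_one, neg_add,
    neg_add_cancel_right]

theorem orbitReflection_orbitReflection {x : ℝ} (hx : x ∈ Ioo a b) :
    orbitReflection F c (orbitReflection F c x) = x := by
  obtain ⟨k, d, hd, rfl⟩ := exists_eq_zpow_apply hlt hc hx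
  rw [orbitReflection_zpow_apply ha hb hlt hc (Ico_subset_Icc_self hd),
    orbitReflection_zpow_apply ha hb hlt hc (add_sub_mem_Icc (Ico_subset_Icc_self hd)), neg_neg,
    sub_sub_cancel]

theorem apply_orbitReflection_apply {x : ℝ} (hx : x ∈ Ioo a b) :
    F (orbitReflection F c (F x)) = orbitReflection F c x := by
  obtain ⟨k, d, hd, rfl⟩ := exists_eq_zpow_apply hlt hc hx
  rw [← F.zpow_add_one_apply, orbitReflection_zpow_apply ha hb hlt hc (Ico_subset_Icc_self hd),
    orbitReflection_zpow_apply ha hb hlt hc (Ico_subset_Icc_self hd), ← F.zpow_add_one_apply,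
    neg_add, neg_add_cancel_right]

theorem mapsTo_orbitReflection : MapsTo (orbitReflection F c) (Ioo a b) (Ioo a b) := by
  intro x hx
  obtain ⟨k, d, hd, rfl⟩ := exists_eq_zpow_apply hlt hc hx
  rw [orbitReflection_zpow_apply ha hb hlt hc (Ico_subset_Icc_self hd)]
  exact OrderIso.mapsTo_zpow_Ioo_of_apply_eq_self ha hb _
    (Icc_subset_Ioo_of_apply_eq_self ha hb hc (add_sub_mem_Icc (Ico_subset_Icc_self hd)))

theorem strictAntiOn_orbitReflection : StrictAntiOn (orbitReflection F c) (Ioo a b) := by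
  intro x hx y hy hxy
  obtain ⟨k, d, hd, rfl⟩ := exists_eq_zpow_apply hlt hc hx
  obtain ⟨l, e, he, rfl⟩ := exists_eq_zpow_apply hlt hc hy
  rw [orbitReflection_zpow_apply ha hb hlt hc (Ico_subset_Icc_self hd),
    orbitReflection_zpow_apply ha hb hlt hc (Ico_subset_Icc_self he)]
  rcases lt_trichotomy k l with hkl | rfl | hlk
  · calc (F ^ (-l)) (c + F c - e) ≤ (F ^ (-k)) c :=
          zpow_apply_le_zpow_apply hlt hc (by linarith [he.1]) le_rfl (neg_lt_neg hkl)
      _ < (F ^ (-k)) (c + F c - d) := (F ^ (-k)).strictMono (by linarith [hd.2])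
  · have hde : d < e := (F ^ k).lt_iff_lt.1 hxy
    exact (F ^ (-k)).strictMono (by linarith)
  · exact absurd hxy (not_lt.2 (zpow_apply_le_zpow_apply hlt hc he.2.le hd.1 hlk))

theorem bijOn_orbitReflection : BijOn (orbitReflection F c) (Ioo a b) (Ioo a b) :=
  have hinv : InvOn (orbitReflection F c) (orbitReflection F c) (Ioo a b) (Ioo a b) :=
    ⟨fun _ hx => orbitReflection_orbitReflection ha hb hlt hc hx,
      fun _ hx => orbitReflection_orbitReflection ha hb hlt hc hx⟩
  hinv.bijOn (mapsTo_orbitReflection ha hb hlt hc) (mapsTo_orbitReflection ha hb hlt hc)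

end Orbits

section PiecewiseLinear

variable {F : ℝ ≃o ℝ} {a b c : ℝ}

theorem piecewiseAffineAt_zpow (hF : F ∈ plGroup a b) (n : ℤ) {x : ℝ} (hx : x ∈ Ioo a b) :
    PiecewiseAffineAt ⇑(F ^ n) x :=
  (isPLOn_iff_forall_piecewiseAffineAt isOpen_Ioo).1 (zpow_mem hF n).2.2 x hx

theorem eventually_locallyAffineAt_orbitReflection (hF : F ∈ plGroup a b)
    (hlt : ∀ x ∈ Ioo a b, x < F x) (hc : c ∈ Ioo a b) (n : ℤ) {x : ℝ} (hx : x ∈ Ioo a b) :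
    ∀ᶠ y in 𝓝[≠] x, (F ^ n) y ∈ Ioo c (F c) → LocallyAffineAt (orbitReflection F c) y := by
  have hcont : Continuous (F ^ n) := (F ^ n).continuous
  by_cases hxn : (F ^ n) x ∈ Icc c (F c)
  · have hσ : ∀ z, PiecewiseAffineAt (fun w => c + F c - w) z := fun _ =>
      .of_forall fun _ => ⟨-1, c + F c, .of_forall fun _ => by ring⟩
    have hψ : PiecewiseAffineAt ((fun w => c + F c - w) ∘ ⇑(F ^ n)) x :=
      (hσ _).comp (piecewiseAffineAt_zpow hF n hx) (F ^ n).injective hcont.continuousAt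
    have hφ : PiecewiseAffineAt (⇑(F ^ n) ∘ (fun w => c + F c - w) ∘ ⇑(F ^ n)) x :=
      PiecewiseAffineAt.comp (x := x) (piecewiseAffineAt_zpow hF n
        (Icc_subset_Ioo_of_apply_eq_self hF.1 hF.2.1 hc (add_sub_mem_Icc hxn))) hψ
        (sub_right_injective.comp (F ^ n).injective) (continuous_const.sub hcont).continuousAt
    filter_upwards [hφ, nhdsWithin_le_nhds (isOpen_Ioo.mem_nhds hx)] with y hy hyI hyn
    refine hy.congr ?_
    filter_upwards [isOpen_Ioo.mem_nhds hyI, (isOpen_Ioo.preimage hcont).mem_nhds hyn]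
      with z hzI hzn
    exact (orbitReflection_eq hlt hzI (Ioo_subset_Ico_self hzn)).symm
  · filter_upwards
      [nhdsWithin_le_nhds ((isClosed_Icc.isOpen_compl.preimage hcont).mem_nhds hxn)] with y hy hyn
    exact absurd (Ioo_subset_Icc_self hyn) hy

theorem exists_eventually_zpow_apply_mem_Ioo (hlt : ∀ x ∈ Ioo a b, x < F x)
    (hc : c ∈ Ioo a b) {x : ℝ} (hx : x ∈ Ioo a b) :
    ∃ n : ℤ, ∀ᶠ y in 𝓝[≠] x, (F ^ n) y ∈ Ioo c (F c) ∨ (F ^ (n + 1)) y ∈ Ioo c (F c) := by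
  obtain ⟨n, hn⟩ := exists_zpow_apply_mem_Ico hlt hc hx
  have hcont : ContinuousAt (F ^ n) x := (F ^ n).continuous.continuousAt
  have hne : ∀ᶠ y in 𝓝[≠] x, (F ^ n) y ≠ c := by
    rcases eq_or_ne ((F ^ n) x) c with h | h
    · filter_upwards [self_mem_nhdsWithin] with y hy
      exact h ▸ (F ^ n).injective.ne hy
    · exact nhdsWithin_le_nhds (hcont.eventually_ne h)
  have hc' : F.symm c < c := by simpa using F.symm.strictMono (hlt c hc)
  refine ⟨n, ?_⟩
  -- If `F^n x = c`, points just below `x` land in `(c, F c)` only after one more step of `F`.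
  filter_upwards [hne,
    nhdsWithin_le_nhds (hcont.eventually (Ioo_mem_nhds (hc'.trans_le hn.1) hn.2))] with y hyc hy
  rcases hyc.lt_or_gt with h | h
  · right
    rw [F.zpow_add_one_apply]
    exact ⟨by simpa using F.strictMono hy.1, F.strictMono h⟩
  · exact .inl ⟨h, hy.2⟩

theorem isPLOn_orbitReflection (hF : F ∈ plGroup a b) (hlt : ∀ x ∈ Ioo a b, x < F x)
    (hc : c ∈ Ioo a b) : IsPLOn (orbitReflection F c) (Ioo a b) := by
  refine (isPLOn_iff_forall_piecewiseAffineAt isOpen_Ioo).2 fun x hx => ?_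
  obtain ⟨n, hn⟩ := exists_eventually_zpow_apply_mem_Ioo hlt hc hx
  filter_upwards [hn, eventually_locallyAffineAt_orbitReflection hF hlt hc n hx,
    eventually_locallyAffineAt_orbitReflection hF hlt hc (n + 1) hx] with y hy h₀ h₁
  exact hy.elim h₀ h₁

end PiecewiseLinear

theorem exists_reversing_involution_of_lt {F : ℝ ≃o ℝ} {a b c : ℝ} (hF : F ∈ plGroup a b)
    (hlt : ∀ x ∈ Ioo a b, x < F x) (hc : c ∈ Ioo a b) :
    ∃ α : ℝ → ℝ, PLIntMinus α (Ioo a b) ∧ (∀ x ∈ Ioo a b, α (α x) = x) ∧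
      ∀ x ∈ Ioo a b, F (α (F x)) = α x :=
  ⟨orbitReflection F c, ⟨bijOn_orbitReflection hF.1 hF.2.1 hlt hc,
      strictAntiOn_orbitReflection hF.1 hF.2.1 hlt hc, isPLOn_orbitReflection hF hlt hc⟩,
    fun _ => orbitReflection_orbitReflection hF.1 hF.2.1 hlt hc,
    fun _ => apply_orbitReflection_apply hF.1 hF.2.1 hlt hc⟩

theorem exists_reversing_involution {F : ℝ ≃o ℝ} {a b : ℝ} (hab : a < b) (hF : F ∈ plGroup a b)
    (hfree : ∀ x ∈ Ioo a b, F x ≠ x) :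
    ∃ α : ℝ → ℝ, PLIntMinus α (Ioo a b) ∧ (∀ x ∈ Ioo a b, α (α x) = x) ∧
      ∀ x ∈ Ioo a b, F (α (F x)) = α x := by
  obtain ⟨c, hc⟩ := nonempty_Ioo.2 hab
  rcases forall_lt_or_forall_gt_of_forall_ne isPreconnected_Ioo F.continuous.continuousOn hfree
    with hlt | hgt
  · exact exists_reversing_involution_of_lt hF hlt hc
  have hlt : ∀ x ∈ Ioo a b, x < F⁻¹ x := fun x hx => by
    simpa using F⁻¹.strictMono (hgt x hx)
  obtain ⟨α, hα, hinv, hconj⟩ := exists_reversing_involution_of_lt (inv_mem hF) hlt hc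
  refine ⟨α, hα, hinv, fun x hx => ?_⟩
  have h := hconj _ (OrderIso.mapsTo_Ioo_of_apply_eq_self hF.1 hF.2.1 hx)
  rw [RelIso.inv_apply_self] at h
  rw [← h, RelIso.apply_inv_self]

/-- Every fixed-point-free `f ∈ PL⁺(I)`, `I` an open interval, is strongly
reversible in `PL(I)` by an orientation-reversing involution `α ∈ PL⁻(I)`:
`α² = id` and `α f α = f⁻¹` (equivalently `f ∘ α ∘ f = α` on `I`). -/
theorem fixed_point_free_strongly_reversible (a b : ℝ) (hab : a < b)
    (f : ℝ → ℝ) (hf : PLIntPlus f (Set.Ioo a b))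
    (hfree : ∀ x ∈ Set.Ioo a b, f x ≠ x) :
    ∃ α : ℝ → ℝ, PLIntMinus α (Set.Ioo a b) ∧
      (∀ x ∈ Set.Ioo a b, α (α x) = x) ∧
      ∀ x ∈ Set.Ioo a b, f (α (f x)) = α x := by
  obtain ⟨F, hF, hFf⟩ := exists_mem_plGroup_eqOn hf
  obtain ⟨α, hα, hinv, hconj⟩ :=
    exists_reversing_involution hab hF fun x hx => hFf hx ▸ hfree x hx
  refine ⟨α, hα, hinv, fun x hx => ?_⟩
  have hFx : F x ∈ Ioo a b := OrderIso.mapsTo_Ioo_of_apply_eq_self hF.1 hF.2.1 hx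
  rw [← hFf hx, ← hFf (hα.1.mapsTo hFx), hconj x hx]
end
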